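/- arXiv:0905.1626 — 8 statements merged into one kernel-verified Lean document; each statement's English description precedes it below -/
import Mathlib

section
/- Let F : ℝ_{>0}^n → ℝ_{>0}^n be positively homogeneous of degree one (F(t x) = t F(x) for all t > 0) and monotone (x ≤ y implies F(x) ≤ F(y)). Then F is nonexpansive with respect to Hilbert's projective metric: dist(F(x), F(y)) ≤ dist(x, y) for all x, y > 0. -/
/-- Hilbert's projective metric on the interior of the positive cone:
`dist(x,y) = max_i log(y_i/x_i) - min_i log(y_i/x_i)`. -/
noncomputable def hilbertDist {n : ℕ} (x y : Fin n → ℝ) : ℝ :=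
  (⨆ i, Real.log (y i / x i)) - (⨅ i, Real.log (y i / x i))

/-- A homogeneous (of degree one) monotone map of the open positive cone to itself
is nonexpansive for Hilbert's projective metric. -/
theorem hilbert_nonexpansive (n : ℕ) (hn : 0 < n)
    (F : (Fin n → ℝ) → (Fin n → ℝ))
    (hFpos : ∀ x, (∀ i, 0 < x i) → ∀ i, 0 < F x i)
    (hhom : ∀ t : ℝ, 0 < t → ∀ x, (∀ i, 0 < x i) → F (t • x) = t • F x)
    (hmono : ∀ x y, (∀ i, 0 < x i) → (∀ i, 0 < y i) → x ≤ y → F x ≤ F y) :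
    ∀ x y, (∀ i, 0 < x i) → (∀ i, 0 < y i) →
      hilbertDist (F x) (F y) ≤ hilbertDist x y := by
  intro x y hx hy
  haveI : Nonempty (Fin n) := ⟨⟨0, hn⟩⟩
  set m : ℝ := ⨅ i, Real.log (y i / x i) with hm
  set M : ℝ := ⨆ i, Real.log (y i / x i) with hM
  have hbddA : BddAbove (Set.range fun i => Real.log (y i / x i)) :=
    Set.Finite.bddAbove (Set.finite_range _)
  have hbddB : BddBelow (Set.range fun i => Real.log (y i / x i)) :=
    Set.Finite.bddBelow (Set.finite_range _)
  have hmle : ∀ i, m ≤ Real.log (y i / x i) := fun i => ciInf_le hbddB i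
  have hleM : ∀ i, Real.log (y i / x i) ≤ M := fun i => le_ciSup hbddA i
  have hem : (0:ℝ) < Real.exp m := Real.exp_pos m
  have heM : (0:ℝ) < Real.exp M := Real.exp_pos M
  -- exp m • x ≤ y ≤ exp M • x
  have h1 : (Real.exp m) • x ≤ y := by
    intro i
    have hratio : Real.exp m ≤ y i / x i := by
      have := Real.exp_le_exp.mpr (hmle i)
      rwa [Real.exp_log (div_pos (hy i) (hx i))] at this
    have := (le_div_iff₀ (hx i)).mp hratio
    simpa [smul_eq_mul] using this
  have h2 : y ≤ (Real.exp M) • x := by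
    intro i
    have hratio : y i / x i ≤ Real.exp M := by
      have := Real.exp_le_exp.mpr (hleM i)
      rwa [Real.exp_log (div_pos (hy i) (hx i))] at this
    have := (div_le_iff₀ (hx i)).mp hratio
    simpa [smul_eq_mul, mul_comm] using this
  have hsx : ∀ i, 0 < ((Real.exp m) • x) i := fun i => by
    simpa [smul_eq_mul] using mul_pos hem (hx i)
  have hsX : ∀ i, 0 < ((Real.exp M) • x) i := fun i => by
    simpa [smul_eq_mul] using mul_pos heM (hx i)
  have hF1 : (Real.exp m) • F x ≤ F y := by
    have := hmono _ _ hsx hy h1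
    rwa [hhom _ hem x hx] at this
  have hF2 : F y ≤ (Real.exp M) • F x := by
    have := hmono _ _ hy hsX h2
    rwa [hhom _ heM x hx] at this
  have hkey : ∀ i, m ≤ Real.log (F y i / F x i) ∧ Real.log (F y i / F x i) ≤ M := by
    intro i
    have hFx := hFpos x hx i
    have hFy := hFpos y hy i
    constructor
    · have hratio : Real.exp m ≤ F y i / F x i := by
        rw [le_div_iff₀ hFx]
        simpa [smul_eq_mul] using hF1 i
      calc m = Real.log (Real.exp m) := (Real.log_exp m).symm
        _ ≤ _ := Real.log_le_log (Real.exp_pos m) hratio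
    · have hratio : F y i / F x i ≤ Real.exp M := by
        rw [div_le_iff₀ hFx]
        simpa [smul_eq_mul, mul_comm] using hF2 i
      calc Real.log (F y i / F x i) ≤ Real.log (Real.exp M) :=
            Real.log_le_log (div_pos hFy hFx) hratio
        _ = M := Real.log_exp M
  unfold hilbertDist
  have hs : (⨆ i, Real.log (F y i / F x i)) ≤ M :=
    ciSup_le fun i => (hkey i).2
  have hi : m ≤ ⨅ i, Real.log (F y i / F x i) :=
    le_ciInf fun i => (hkey i).1
  linarith
end

section
/- Let F : ℝ_{>0}^n → ℝ_{>0}^n be homogeneous of degree one and monotone, and suppose F is a contraction in Hilbert's projective metric, i.e. there is K ∈ [0,1) with dist(F(x), F(y)) ≤ K·dist(x, y) for all x, y > 0. Then F has an eigenvector in ℝ_{>0}^n, i.e. there exist u > 0 and λ > 0 with F(u) = λ u, and this eigenvector is unique up to positive scalar multiples. -/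
section aux
variable {n : ℕ} [Nonempty (Fin n)]

lemma bddA (f : Fin n → ℝ) : BddAbove (Set.range f) := (Set.finite_range f).bddAbove
lemma bddB (f : Fin n → ℝ) : BddBelow (Set.range f) := (Set.finite_range f).bddBelow

lemma hd_nonneg (x y : Fin n → ℝ) : 0 ≤ hilbertDist x y := by
  set f := fun i => Real.log (y i / x i) with hf
  obtain ⟨i⟩ := (inferInstance : Nonempty (Fin n))
  have h1 : ⨅ k, f k ≤ f i := ciInf_le (bddB f) i
  have h2 : f i ≤ ⨆ k, f k := le_ciSup (bddA f) i
  simp only [hilbertDist, ← hf]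
  linarith

lemma my_ciSup_sub (f : Fin n → ℝ) (c : ℝ) : (⨆ i, (f i - c)) = (⨆ i, f i) - c := by
  obtain ⟨i, hi⟩ := exists_eq_ciSup_of_finite (f := f)
  obtain ⟨j, hj⟩ := exists_eq_ciSup_of_finite (f := fun i => f i - c)
  apply le_antisymm
  · exact ciSup_le fun k => sub_le_sub_right (le_ciSup (bddA f) k) c
  · rw [← hj]
    have := le_ciSup (bddA (fun i => f i - c)) i
    linarith [this, hi.symm ▸ (le_refl (f i))]

lemma my_ciInf_sub (f : Fin n → ℝ) (c : ℝ) : (⨅ i, (f i - c)) = (⨅ i, f i) - c := by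
  obtain ⟨i, hi⟩ := exists_eq_ciInf_of_finite (f := f)
  obtain ⟨j, hj⟩ := exists_eq_ciInf_of_finite (f := fun i => f i - c)
  apply le_antisymm
  · have := ciInf_le (bddB (fun i => f i - c)) i
    linarith
  · exact le_ciInf fun k => sub_le_sub_right (ciInf_le (bddB f) k) c

/-- scale invariance in the second argument -/
lemma hd_smul_right (x y : Fin n → ℝ) (hx : ∀ i, 0 < x i) (hy : ∀ i, 0 < y i)
    (s : ℝ) (hs : 0 < s) : hilbertDist x (s • y) = hilbertDist x y := by
  have h : ∀ i, Real.log ((s • y) i / x i) = Real.log (y i / x i) + Real.log s := by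
    intro i
    have : (s • y) i / x i = (y i / x i) * s := by
      simp [Pi.smul_apply, smul_eq_mul]; ring
    have hxi := hx i; have hyi := hy i
    rw [this, Real.log_mul (by positivity) (ne_of_gt hs)]
  simp only [hilbertDist, h]
  have h1 : (⨆ i, (Real.log (y i / x i) + Real.log s))
      = (⨆ i, Real.log (y i / x i)) + Real.log s := by
    have := my_ciSup_sub (fun i => Real.log (y i / x i)) (-Real.log s)
    simpa [sub_neg_eq_add] using this
  have h2 : (⨅ i, (Real.log (y i / x i) + Real.log s))
      = (⨅ i, Real.log (y i / x i)) + Real.log s := by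
    have := my_ciInf_sub (fun i => Real.log (y i / x i)) (-Real.log s)
    simpa [sub_neg_eq_add] using this
  rw [h1, h2]; ring

lemma hd_smul_left (x y : Fin n → ℝ) (hx : ∀ i, 0 < x i) (hy : ∀ i, 0 < y i)
    (s : ℝ) (hs : 0 < s) : hilbertDist (s • x) y = hilbertDist x y := by
  have h : ∀ i, Real.log (y i / (s • x) i) = Real.log (y i / x i) - Real.log s := by
    intro i
    have : y i / (s • x) i = (y i / x i) / s := by
      simp [Pi.smul_apply, smul_eq_mul]; field_simp
    have hxi := hx i; have hyi := hy i
    rw [this, Real.log_div (by positivity) (ne_of_gt hs)]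
  simp only [hilbertDist, h, my_ciSup_sub, my_ciInf_sub]
  ring

/-- coordinatewise bound when some log-ratio vanishes -/
lemma hd_coord_bound (x y : Fin n → ℝ) (j : Fin n) (hj : Real.log (y j / x j) = 0)
    (i : Fin n) : |Real.log (y i / x i)| ≤ hilbertDist x y := by
  set f := fun i => Real.log (y i / x i) with hf
  have hsup : f i ≤ ⨆ k, f k := le_ciSup (bddA f) i
  have hinf : ⨅ k, f k ≤ f i := ciInf_le (bddB f) i
  have hsup0 : (0:ℝ) ≤ ⨆ k, f k := hj ▸ le_ciSup (bddA f) j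
  have hinf0 : ⨅ k, f k ≤ 0 := hj ▸ ciInf_le (bddB f) j
  rw [abs_le]
  constructor <;> simp only [hilbertDist, ← hf] <;> [linarith; linarith]

lemma hd_le_of_coord (x y : Fin n → ℝ) (C : ℝ)
    (h : ∀ i, |Real.log (y i / x i)| ≤ C) : hilbertDist x y ≤ 2 * C := by
  have h1 : (⨆ i, Real.log (y i / x i)) ≤ C :=
    ciSup_le fun i => (abs_le.1 (h i)).2
  have h2 : -C ≤ ⨅ i, Real.log (y i / x i) :=
    le_ciInf fun i => (abs_le.1 (h i)).1
  simp only [hilbertDist]; linarith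

lemma hd_eq_zero_ratios (x y : Fin n → ℝ) (h : hilbertDist x y ≤ 0) (i j : Fin n) :
    Real.log (y i / x i) = Real.log (y j / x j) := by
  set f := fun i => Real.log (y i / x i) with hf
  have hij : ∀ k, f k ≤ ⨆ m, f m := fun k => le_ciSup (bddA f) k
  have hij2 : ∀ k, ⨅ m, f m ≤ f k := fun k => ciInf_le (bddB f) k
  have : (⨆ m, f m) ≤ ⨅ m, f m := by simp only [hilbertDist, ← hf] at h; linarith
  have hi := le_trans (le_trans (hij i) this) (hij2 j)
  have hji := le_trans (le_trans (hij j) this) (hij2 i)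
  exact le_antisymm hi hji

end aux

/-- A homogeneous monotone self-map of the open positive cone which is a contraction
in Hilbert's projective metric has a positive eigenvector, unique up to a positive
scalar multiple. -/
theorem eigenvector_of_hilbert_contraction (n : ℕ) (hn : 0 < n)
    (F : (Fin n → ℝ) → (Fin n → ℝ))
    (hFpos : ∀ x, (∀ i, 0 < x i) → ∀ i, 0 < F x i)
    (hhom : ∀ t : ℝ, 0 < t → ∀ x, (∀ i, 0 < x i) → F (t • x) = t • F x)
    (hmono : ∀ x y, (∀ i, 0 < x i) → (∀ i, 0 < y i) → x ≤ y → F x ≤ F y)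
    (K : ℝ) (hK0 : 0 ≤ K) (hK1 : K < 1)
    (hcontr : ∀ x y, (∀ i, 0 < x i) → (∀ i, 0 < y i) →
      hilbertDist (F x) (F y) ≤ K * hilbertDist x y) :
    ∃ (u : Fin n → ℝ) (lam : ℝ), (∀ i, 0 < u i) ∧ 0 < lam ∧ F u = lam • u ∧
      ∀ (v : Fin n → ℝ) (μ : ℝ), (∀ i, 0 < v i) → 0 < μ → F v = μ • v →
        ∃ t : ℝ, 0 < t ∧ v = t • u := by
  haveI : Nonempty (Fin n) := ⟨⟨0, hn⟩⟩
  set i0 : Fin n := ⟨0, hn⟩ with hi0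
  set G : (Fin n → ℝ) → (Fin n → ℝ) := fun x => (F x i0)⁻¹ • F x with hG
  have hGpos : ∀ x, (∀ i, 0 < x i) → ∀ i, 0 < G x i := by
    intro x hx i
    have h1 := hFpos x hx i
    have h2 := hFpos x hx i0
    simp only [hG, Pi.smul_apply, smul_eq_mul]
    positivity
  have hGnorm : ∀ x, (∀ i, 0 < x i) → G x i0 = 1 := by
    intro x hx
    have h2 := hFpos x hx i0
    simp only [hG, Pi.smul_apply, smul_eq_mul]
    exact inv_mul_cancel₀ (ne_of_gt h2)
  have hGd : ∀ a b, (∀ i, 0 < a i) → (∀ i, 0 < b i) →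
      hilbertDist (G a) (G b) = hilbertDist (F a) (F b) := by
    intro a b ha hb
    have hFa := hFpos a ha
    have hFb := hFpos b hb
    show hilbertDist ((F a i0)⁻¹ • F a) ((F b i0)⁻¹ • F b) = _
    rw [hd_smul_left (F a) ((F b i0)⁻¹ • F b) hFa
        (fun i => by have := hGpos b hb i; simpa [hG] using this)
        _ (inv_pos.2 (hFa i0)),
      hd_smul_right (F a) (F b) hFa hFb _ (inv_pos.2 (hFb i0))]
  set xs : ℕ → (Fin n → ℝ) := fun k => G^[k] (fun _ => 1) with hxs
  have hstep : ∀ k, xs (k + 1) = G (xs k) := by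
    intro k; simp only [hxs]; rw [Function.iterate_succ_apply']
  have hxs_pos : ∀ k, ∀ i, 0 < xs k i := by
    intro k
    induction k with
    | zero => intro i; simp [hxs]
    | succ m ih => rw [hstep]; exact hGpos _ ih
  have hxs_norm : ∀ k, xs k i0 = 1 := by
    intro k
    cases k with
    | zero => simp [hxs]
    | succ m => rw [hstep]; exact hGnorm _ (hxs_pos m)
  set d : ℕ → ℝ := fun k => hilbertDist (xs k) (xs (k + 1)) with hd
  have hd_step : ∀ k, d (k + 1) ≤ K * d k := by
    intro k
    simp only [hd]
    calc hilbertDist (xs (k + 1)) (xs (k + 2))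
        = hilbertDist (G (xs k)) (G (xs (k + 1))) := by
          rw [← hstep k, ← hstep (k + 1)]
      _ = hilbertDist (F (xs k)) (F (xs (k + 1))) :=
          hGd _ _ (hxs_pos k) (hxs_pos (k + 1))
      _ ≤ K * hilbertDist (xs k) (xs (k + 1)) :=
          hcontr _ _ (hxs_pos k) (hxs_pos (k + 1))
  have hd0 : 0 ≤ d 0 := hd_nonneg _ _
  have hd_geom : ∀ k, d k ≤ d 0 * K ^ k := by
    intro k
    induction k with
    | zero => simp
    | succ m ih =>
      calc d (m + 1) ≤ K * d m := hd_step m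
        _ ≤ K * (d 0 * K ^ m) := mul_le_mul_of_nonneg_left ih hK0
        _ = d 0 * K ^ (m + 1) := by ring
  set y : ℕ → (Fin n → ℝ) := fun k i => Real.log (xs k i) with hy
  have hcoord : ∀ k i, |Real.log (xs (k + 1) i / xs k i)| ≤ d k := by
    intro k i
    exact hd_coord_bound (xs k) (xs (k + 1)) i0
      (by rw [hxs_norm, hxs_norm]; simp) i
  have hy_dist : ∀ k, dist (y k) (y (k + 1)) ≤ d 0 * K ^ k := by
    intro k
    rw [dist_pi_le_iff (by positivity)]
    intro i
    have h1 : dist (y k i) (y (k + 1) i)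
        = |Real.log (xs (k + 1) i / xs k i)| := by
      rw [Real.dist_eq, abs_sub_comm,
        Real.log_div (ne_of_gt (hxs_pos (k + 1) i)) (ne_of_gt (hxs_pos k i))]
    rw [h1]
    exact le_trans (hcoord k i) (hd_geom k)
  have hcauchy : CauchySeq y := cauchySeq_of_le_geometric K (d 0) hK1 hy_dist
  obtain ⟨l, hl⟩ := cauchySeq_tendsto_of_complete hcauchy
  set u : Fin n → ℝ := fun i => Real.exp (l i) with hu
  have hupos : ∀ i, 0 < u i := fun i => Real.exp_pos _
  have hxu : ∀ k, hilbertDist (xs k) u ≤ 2 * dist (y k) l := by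
    intro k
    apply hd_le_of_coord
    intro i
    have h1 : Real.log (u i / xs k i) = l i - y k i := by
      rw [Real.log_div (ne_of_gt (hupos i)) (ne_of_gt (hxs_pos k i))]
      simp [hu, hy, Real.log_exp]
    rw [h1]
    calc |l i - y k i| = dist (y k i) (l i) := by rw [Real.dist_eq, abs_sub_comm]
      _ ≤ dist (y k) l := dist_le_pi_dist _ _ i
  have hGupos : ∀ i, 0 < G u i := hGpos u hupos
  have hdistl : Filter.Tendsto (fun k => dist (y k) l) Filter.atTop (nhds 0) :=
    tendsto_iff_dist_tendsto_zero.1 hl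
  have key : ∀ i, Real.log (G u i) = l i := by
    intro i
    have hbound : ∀ k, dist (y (k + 1) i) (Real.log (G u i))
        ≤ K * (2 * dist (y k) l) := by
      intro k
      have h1 : dist (y (k + 1) i) (Real.log (G u i))
          = |Real.log (G u i / xs (k + 1) i)| := by
        rw [Real.dist_eq, abs_sub_comm,
          Real.log_div (ne_of_gt (hGupos i)) (ne_of_gt (hxs_pos (k + 1) i))]
      rw [h1]
      have h2 : |Real.log (G u i / xs (k + 1) i)|
          ≤ hilbertDist (xs (k + 1)) (G u) :=
        hd_coord_bound (xs (k + 1)) (G u) i0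
          (by rw [hxs_norm, hGnorm u hupos]; simp) i
      have h3 : hilbertDist (xs (k + 1)) (G u) ≤ K * hilbertDist (xs k) u := by
        rw [hstep k, hGd _ _ (hxs_pos k) hupos]
        exact hcontr _ _ (hxs_pos k) hupos
      have h4 := hxu k
      calc |Real.log (G u i / xs (k + 1) i)| ≤ K * hilbertDist (xs k) u :=
            le_trans h2 h3
        _ ≤ K * (2 * dist (y k) l) := mul_le_mul_of_nonneg_left h4 hK0
    have htend0 : Filter.Tendsto (fun k => dist (y (k + 1) i) (Real.log (G u i)))
        Filter.atTop (nhds 0) := by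
      apply squeeze_zero (fun k => dist_nonneg) hbound
      have := hdistl.const_mul (K * 2)
      simpa [mul_assoc] using this
    have htend1 : Filter.Tendsto (fun k => y (k + 1) i) Filter.atTop
        (nhds (Real.log (G u i))) := tendsto_iff_dist_tendsto_zero.2 htend0
    have htend2 : Filter.Tendsto (fun k => y (k + 1) i) Filter.atTop
        (nhds (l i)) := by
      have h5 := (tendsto_pi_nhds.1 hl i).comp (Filter.tendsto_add_atTop_nat 1)
      exact h5
    exact tendsto_nhds_unique htend1 htend2
  have hGu : G u = u := by
    funext i
    have h1 : G u i = Real.exp (Real.log (G u i)) :=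
      (Real.exp_log (hGupos i)).symm
    rw [h1, key i]
  set lam : ℝ := F u i0 with hlam
  have hlampos : 0 < lam := hFpos u hupos i0
  have hFu : F u = lam • u := by
    have h1 : lam • G u = lam • u := by rw [hGu]
    have h2 : lam • G u = F u := by
      simp only [hG, smul_smul, mul_inv_cancel₀ (ne_of_gt hlampos), one_smul]
      rw [← hlam, mul_inv_cancel₀ (ne_of_gt hlampos), one_smul]
    rw [← h2, h1]
  refine ⟨u, lam, hupos, hlampos, hFu, ?_⟩
  intro v μ hv hμ hFv
  have h0 : hilbertDist u v ≤ K * hilbertDist u v := by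
    have h1 := hcontr u v hupos hv
    rw [hFu, hFv, hd_smul_left u (μ • v) hupos
        (fun i => by simpa using mul_pos hμ (hv i)) lam hlampos,
      hd_smul_right u v hupos hv μ hμ] at h1
    exact h1
  have hzero : hilbertDist u v ≤ 0 := by nlinarith [hd_nonneg u v]
  refine ⟨v i0 / u i0, div_pos (hv i0) (hupos i0), ?_⟩
  funext i
  have h2 : Real.log (v i / u i) = Real.log (v i0 / u i0) :=
    hd_eq_zero_ratios u v hzero i i0
  have h3 : v i / u i = v i0 / u i0 := by
    have e1 := Real.exp_log (div_pos (hv i) (hupos i))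
    have e2 := Real.exp_log (div_pos (hv i0) (hupos i0))
    rw [← e1, ← e2, h2]
  have h4 : v i = (v i0 / u i0) * u i := by
    rw [← h3]
    field_simp
    rw [mul_div_assoc, div_self (ne_of_gt (hupos i)), mul_one]
  simpa using h4
end

section
/- Let F = [f_{i₁,…,i_d}] be a nonnegative tensor in ℝ^{m₁×⋯×m_d} with d ≥ 2. If F is irreducible, then F is weakly irreducible. -/
/-- The `d`-partite (undirected) graph associated with a tensor
`f ∈ ℝ^{m₁ × ⋯ × m_d}`: the vertices are the disjoint union of the
`V_j = Fin (m j)`, and `(k, a)` is adjacent to `(l, b)` (with `k ≠ l`) iff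
`f i > 0` for some index tuple `i` with `i k = a` and `i l = b`. -/
def tensorGraph {d : ℕ} {m : Fin d → ℕ} (f : (∀ j, Fin (m j)) → ℝ) :
    SimpleGraph (Σ j : Fin d, Fin (m j)) where
  Adj u v := u.1 ≠ v.1 ∧ ∃ i : ∀ j, Fin (m j), i u.1 = u.2 ∧ i v.1 = v.2 ∧ 0 < f i
  symm := by
    constructor
    rintro u v ⟨hne, i, h1, h2, hf⟩
    exact ⟨hne.symm, i, h2, h1, hf⟩
  loopless := by
    constructor
    rintro u ⟨hne, -⟩
    exact hne rfl

/-- A tensor is irreducible if for every nonempty proper subset `I` of the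
disjoint union of the `V_j`, there are `k`, `i_k ∈ I ∩ V_k` and
`i_j ∈ V_j \ I` for all `j ≠ k`, with `f_{i₁,…,i_d} > 0`. -/
def TensorIrreducible {d : ℕ} {m : Fin d → ℕ} (f : (∀ j, Fin (m j)) → ℝ) : Prop :=
  ∀ I : Set (Σ j : Fin d, Fin (m j)), I.Nonempty → I ≠ Set.univ →
    ∃ (k : Fin d) (i : ∀ j, Fin (m j)),
      (⟨k, i k⟩ : Σ j : Fin d, Fin (m j)) ∈ I ∧
      (∀ j, j ≠ k → (⟨j, i j⟩ : Σ j : Fin d, Fin (m j)) ∉ I) ∧ 0 < f i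

/-- An irreducible nonnegative tensor (with `d ≥ 2`) is weakly irreducible,
i.e. its associated `d`-partite graph is connected. -/
theorem irreducible_implies_weakly_irreducible (d : ℕ) (hd : 2 ≤ d)
    (m : Fin d → ℕ) (hm : ∀ j, 2 ≤ m j)
    (f : (∀ j, Fin (m j)) → ℝ) (hf : ∀ i, 0 ≤ f i)
    (hirr : TensorIrreducible f) :
    (tensorGraph f).Connected := by
  have hdpos : 0 < d := by omega
  have hne : ∀ j : Fin d, Nonempty (Fin (m j)) := fun j =>
    ⟨⟨0, by have := hm j; omega⟩⟩
  have hV : Nonempty (Σ j : Fin d, Fin (m j)) := by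
    obtain ⟨a⟩ := hne ⟨0, hdpos⟩
    exact ⟨⟨⟨0, hdpos⟩, a⟩⟩
  obtain ⟨v₀⟩ := hV
  suffices h : ∀ w, (tensorGraph f).Reachable v₀ w by
    haveI : Nonempty (Σ j : Fin d, Fin (m j)) := ⟨v₀⟩
    exact ⟨fun u v => (h u).symm.trans (h v)⟩
  by_contra hcon
  push_neg at hcon
  set I : Set (Σ j : Fin d, Fin (m j)) := {w | (tensorGraph f).Reachable v₀ w} with hI
  have hIne : I.Nonempty := ⟨v₀, SimpleGraph.Reachable.refl v₀⟩
  have hInu : I ≠ Set.univ := by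
    obtain ⟨w, hw⟩ := hcon
    intro h
    exact hw (by rw [hI] at h; exact (Set.eq_univ_iff_forall.mp h) w)
  obtain ⟨k, i, hkI, hout, hfi⟩ := hirr I hIne hInu
  -- pick j ≠ k
  obtain ⟨j, hjk⟩ : ∃ j : Fin d, j ≠ k := by
    haveI : Nontrivial (Fin d) := Fin.nontrivial_iff_two_le.mpr hd
    exact exists_ne k
  have hadj : (tensorGraph f).Adj (⟨k, i k⟩ : Σ j : Fin d, Fin (m j)) ⟨j, i j⟩ := by
    refine ⟨by simpa using hjk.symm, i, rfl, rfl, hfi⟩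
  exact hout j hjk ((hkI : (tensorGraph f).Reachable v₀ _).trans hadj.reachable)
end

section
/- Let f(x₁,…,x_d) = Σ f_{i₁,…,i_d} x_{i₁,1}⋯x_{i_d,d} be a nonnegative multilinear form with weakly irreducible tensor F, and let p₁,…,p_d ≥ d. Then the eigenvalue system Σ_{i_l, l≠j} f_{i₁,…,i_d} ∏_{l≠j} x_{i_l,l} = λ x_{i_j,j}^{p_j−1} (for all j ∈ [d], i_j ∈ [m_j]) with constraints ‖x_j‖_{p_j} = 1 has a unique positive solution (x₁,…,x_d) > 0. -/
set_option maxHeartbeats 1000000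

open Finset Real

lemma PF_amgm {d : ℕ} (hd : 0 < d) (w r : Fin d → ℝ)
    (hw : ∀ j, 0 < w j) (hW : ∑ j, w j ≤ 1) (hr : ∀ j, 0 < r j) :
    (∏ j, r j ^ w j ≤ ∑ j, w j * r j + (1 - ∑ j, w j)) ∧
    ((∏ j, r j ^ w j = ∑ j, w j * r j + (1 - ∑ j, w j)) →
      ∀ j, r j = ∑ j, w j * r j + (1 - ∑ j, w j)) := by
  have hne : (Finset.univ : Finset (Fin d)).Nonempty := by
    refine univ_nonempty_iff.mpr ?_
    exact ⟨⟨0, hd⟩⟩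
  set W : ℝ := ∑ j, w j with hW_def
  set A : ℝ := ∑ j, w j * r j + (1 - W) with hA_def
  have hsum_pos : 0 < ∑ j, w j * r j :=
    Finset.sum_pos (fun j _ => mul_pos (hw j) (hr j)) hne
  have hA : 0 < A := by
    have : (0:ℝ) ≤ 1 - W := by linarith
    dsimp [A]; linarith
  -- termwise inequality
  have key : ∀ j, w j * (Real.log (r j) - Real.log A + 1) ≤ w j * (r j / A) := by
    intro j
    refine mul_le_mul_of_nonneg_left ?_ (hw j).le
    have h := Real.add_one_le_exp (Real.log (r j / A))
    rwa [Real.exp_log (div_pos (hr j) hA), Real.log_div (hr j).ne' hA.ne'] at h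
  have key1 : 1 - Real.log A ≤ 1 / A := by
    have h := Real.add_one_le_exp (Real.log (1 / A))
    rw [Real.exp_log (by positivity), Real.log_div one_ne_zero hA.ne', Real.log_one] at h; linarith
  have e1 : ∀ (u : Fin d → ℝ), ∑ j, w j * (Real.log (u j) - Real.log A + 1)
      = (∑ j, w j * Real.log (u j)) - W * Real.log A + W := by
    intro u
    simp only [mul_sub, mul_add, mul_one]
    rw [Finset.sum_add_distrib, Finset.sum_sub_distrib, ← Finset.sum_mul]
  have e2 : ∑ j, w j * (r j / A) = (∑ j, w j * r j) / A := by
    rw [Finset.sum_div]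
    exact Finset.sum_congr rfl fun j _ => (mul_div_assoc _ _ _).symm
  have hAA : (∑ j, w j * r j) / A + (1 - W) * (1 / A) = 1 := by
    rw [mul_one_div, ← add_div, ← hA_def, div_self hA.ne']
  have h2 : (1 - W) * (1 - Real.log A) ≤ (1 - W) * (1 / A) :=
    mul_le_mul_of_nonneg_left key1 (by linarith)
  have expand : (1 - W) * (1 - Real.log A) = 1 - W - Real.log A + W * Real.log A := by ring
  have main_le :
      ∑ j, w j * Real.log (r j) ≤ Real.log A := by
    have h1 : ∑ j, w j * (Real.log (r j) - Real.log A + 1) ≤ ∑ j, w j * (r j / A) :=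
      Finset.sum_le_sum fun j _ => key j
    rw [e1 r, e2] at h1
    nlinarith [h1, h2, hAA, expand]
  have prod_eq : ∏ j, r j ^ w j = Real.exp (∑ j, w j * Real.log (r j)) := by
    rw [Real.exp_sum]
    refine Finset.prod_congr rfl fun j _ => ?_
    rw [Real.rpow_def_of_pos (hr j), mul_comm]
  constructor
  · rw [prod_eq]
    calc Real.exp (∑ j, w j * Real.log (r j)) ≤ Real.exp (Real.log A) :=
          Real.exp_le_exp.mpr main_le
      _ = A := Real.exp_log hA
  · intro heq j
    by_contra hne'
    -- strict inequality in term j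
    have hstrict : w j * (Real.log (r j) - Real.log A + 1) < w j * (r j / A) := by
      refine mul_lt_mul_of_pos_left ?_ (hw j)
      have hx : Real.log (r j / A) ≠ 0 := by
        intro h0
        rcases Real.log_eq_zero.mp h0 with h | h | h
        · exact absurd h (div_pos (hr j) hA).ne'
        · exact hne' (by field_simp at h; linarith)
        · nlinarith [div_pos (hr j) hA]
      have h := Real.add_one_lt_exp hx
      rwa [Real.exp_log (div_pos (hr j) hA), Real.log_div (hr j).ne' hA.ne'] at h
    have h1 : ∑ k, w k * (Real.log (r k) - Real.log A + 1) < ∑ k, w k * (r k / A) :=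
      Finset.sum_lt_sum (fun k _ => key k) ⟨j, Finset.mem_univ j, hstrict⟩
    rw [e1 r, e2] at h1
    have main_lt : ∑ k, w k * Real.log (r k) < Real.log A := by
      nlinarith [h1, h2, hAA, expand]
    have : ∏ k, r k ^ w k < A := by
      rw [prod_eq]
      calc Real.exp (∑ k, w k * Real.log (r k)) < Real.exp (Real.log A) :=
            Real.exp_lt_exp.mpr main_lt
        _ = A := Real.exp_log hA
    rw [heq] at this
    exact lt_irrefl _ this

lemma PF_walk_const {V : Type*} {G : SimpleGraph V} {g : V → ℝ}
    (h : ∀ u v, G.Adj u v → g u = g v) {u v : V} (w : G.Walk u v) : g u = g v := by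
  induction w with
  | nil => rfl
  | cons h' p ih => exact (h _ _ h').trans ih

lemma PF_walk_cross {V : Type*} {G : SimpleGraph V} (P : V → Prop) {u v : V}
    (w : G.Walk u v) : ¬ P u → P v → ∃ a b, G.Adj a b ∧ ¬ P a ∧ P b := by
  induction w with
  | nil => intro hu hv; exact absurd hv hu
  | @cons x y z h p ih =>
    intro hu hv
    by_cases hy : P y
    · exact ⟨x, y, h, hu, hy⟩
    · exact ih hy hv

lemma PF_rpow_sum {x : ℝ} (hx : 0 < x) {ι : Type*} (s : Finset ι) (g : ι → ℝ) :
    x ^ (∑ i ∈ s, g i) = ∏ i ∈ s, x ^ g i := by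
  classical
  induction s using Finset.induction with
  | empty => simp
  | insert _ _ ha ih =>
    rw [Finset.sum_insert ha, Finset.prod_insert ha, Real.rpow_add hx, ih]

lemma PF_Wle {d : ℕ} (hd : 2 ≤ d) (p : Fin d → ℝ) (hp : ∀ j, (d : ℝ) ≤ p j) :
    ∑ j, (p j)⁻¹ ≤ 1 := by
  have hdR : (0:ℝ) < d := by exact_mod_cast Nat.lt_of_lt_of_le Nat.zero_lt_two hd
  have h1 : ∀ j : Fin d, (p j)⁻¹ ≤ (d:ℝ)⁻¹ := fun j => inv_anti₀ hdR (hp j)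
  calc ∑ j, (p j)⁻¹ ≤ ∑ _j : Fin d, (d:ℝ)⁻¹ := Finset.sum_le_sum fun j _ => h1 j
    _ = d * (d:ℝ)⁻¹ := by
        rw [Finset.sum_const, Finset.card_univ, Fintype.card_fin, nsmul_eq_mul]
    _ = 1 := mul_inv_cancel₀ hdR.ne'

noncomputable def PFobj {d : ℕ} {m : Fin d → ℕ} (f : (∀ j, Fin (m j)) → ℝ)
    (p : Fin d → ℝ) (t : ∀ j, Fin (m j) → ℝ) : ℝ :=
  ∑ i, f i * ∏ j, t j (i j) ^ (p j)⁻¹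

lemma PF_fiber {d : ℕ} {m : Fin d → ℕ}
    (f : (∀ j, Fin (m j)) → ℝ)
    (x : ∀ j, Fin (m j) → ℝ) (j : Fin d) (c : Fin (m j) → ℝ) :
    ∑ i : ∀ l, Fin (m l), f i * (c (i j) * ∏ l ∈ Finset.univ.erase j, x l (i l))
      = ∑ a, c a * ∑ i ∈ Finset.univ.filter (fun i : ∀ l, Fin (m l) => i j = a),
          f i * ∏ l ∈ Finset.univ.erase j, x l (i l) := by
  classical
  rw [← Finset.sum_fiberwise_of_maps_to (t := Finset.univ)
      (g := fun i : ∀ l, Fin (m l) => i j) (fun i _ => Finset.mem_univ (i j))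
      (fun i => f i * (c (i j) * ∏ l ∈ Finset.univ.erase j, x l (i l)))]
  refine Finset.sum_congr rfl fun a _ => ?_
  rw [Finset.mul_sum]
  refine Finset.sum_congr rfl fun i hi => ?_
  have hij : i j = a := (Finset.mem_filter.mp hi).2
  rw [hij]; ring

lemma PF_lam {d : ℕ} {m : Fin d → ℕ}
    (f : (∀ j, Fin (m j)) → ℝ) (p : Fin d → ℝ)
    (x : ∀ j, Fin (m j) → ℝ) (lam : ℝ)
    (hpos : ∀ j a, 0 < x j a)
    (j : Fin d) (hpj : 0 < p j)
    (hnormj : ∑ a, x j a ^ p j = 1)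
    (heigj : ∀ a : Fin (m j),
      (∑ i ∈ Finset.univ.filter (fun i : ∀ l, Fin (m l) => i j = a),
          f i * ∏ l ∈ Finset.univ.erase j, x l (i l)) = lam * x j a ^ (p j - 1)) :
    ∑ i, f i * ∏ l, x l (i l) = lam := by
  classical
  have step1 : ∀ i : ∀ l, Fin (m l),
      f i * ∏ l, x l (i l) = f i * (x j (i j) * ∏ l ∈ Finset.univ.erase j, x l (i l)) := by
    intro i
    rw [Finset.mul_prod_erase Finset.univ (fun l => x l (i l)) (Finset.mem_univ j)]
  calc ∑ i, f i * ∏ l, x l (i l)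
      = ∑ i : ∀ l, Fin (m l), f i * (x j (i j) * ∏ l ∈ Finset.univ.erase j, x l (i l)) :=
        Finset.sum_congr rfl fun i _ => step1 i
    _ = ∑ a, x j a * ∑ i ∈ Finset.univ.filter (fun i : ∀ l, Fin (m l) => i j = a),
          f i * ∏ l ∈ Finset.univ.erase j, x l (i l) := PF_fiber f x j (x j)
    _ = ∑ a, lam * x j a ^ p j := by
        refine Finset.sum_congr rfl fun a _ => ?_
        rw [heigj a, show p j = 1 + (p j - 1) by ring, Real.rpow_add (hpos j a),
          Real.rpow_one]
        ring
    _ = lam := by rw [← Finset.mul_sum, hnormj, mul_one]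

lemma PF_tangent {d : ℕ} (hd : 2 ≤ d) {m : Fin d → ℕ}
    (f : (∀ j, Fin (m j)) → ℝ) (hf : ∀ i, 0 ≤ f i)
    (p : Fin d → ℝ) (hp : ∀ j, (d : ℝ) ≤ p j)
    (x : ∀ j, Fin (m j) → ℝ) (lam : ℝ)
    (hpos : ∀ j a, 0 < x j a)
    (hnorm : ∀ j, ∑ a, x j a ^ p j = 1)
    (heig : ∀ (j : Fin d) (a : Fin (m j)),
      (∑ i ∈ Finset.univ.filter (fun i : ∀ l, Fin (m l) => i j = a),
          f i * ∏ l ∈ Finset.univ.erase j, x l (i l)) = lam * x j a ^ (p j - 1))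
    (s : ∀ j, Fin (m j) → ℝ) (hs : ∀ j a, 0 < s j a) (hsn : ∀ j, ∑ a, s j a = 1) :
    PFobj f p s ≤ lam ∧
      (PFobj f p s = lam → ∀ i : ∀ l, Fin (m l), 0 < f i → ∀ j k : Fin d,
        s j (i j) / x j (i j) ^ p j = s k (i k) / x k (i k) ^ p k) := by
  classical
  have hd0 : 0 < d := by omega
  have hdR : (0:ℝ) < d := by exact_mod_cast hd0
  have hppos : ∀ j, 0 < p j := fun j => lt_of_lt_of_le hdR (hp j)
  have hW : ∑ j, (p j)⁻¹ ≤ 1 := by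
    have h1 : ∀ j : Fin d, (p j)⁻¹ ≤ (d:ℝ)⁻¹ := fun j => inv_anti₀ hdR (hp j)
    calc ∑ j, (p j)⁻¹ ≤ ∑ _j : Fin d, (d:ℝ)⁻¹ := Finset.sum_le_sum fun j _ => h1 j
      _ = d * (d:ℝ)⁻¹ := by
          rw [Finset.sum_const, Finset.card_univ, Fintype.card_fin, nsmul_eq_mul]
      _ = 1 := mul_inv_cancel₀ hdR.ne'
  set W := ∑ j, (p j)⁻¹ with hW_def
  set r : (∀ l, Fin (m l)) → Fin d → ℝ := fun i j => s j (i j) / x j (i j) ^ p j with hr_def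
  have hrpos : ∀ i j, 0 < r i j := fun i j =>
    div_pos (hs j (i j)) (Real.rpow_pos_of_pos (hpos j (i j)) _)
  set A : (∀ l, Fin (m l)) → ℝ := fun i => ∑ j, (p j)⁻¹ * r i j + (1 - W) with hA_def
  set X : (∀ l, Fin (m l)) → ℝ := fun i => ∏ j, x j (i j) with hX_def
  have hXpos : ∀ i, 0 < X i := fun i => Finset.prod_pos fun j _ => hpos j (i j)
  have hprod : ∀ i, ∏ j, s j (i j) ^ (p j)⁻¹ = X i * ∏ j, r i j ^ (p j)⁻¹ := by
    intro i
    have hfac : ∀ j : Fin d, r i j ^ (p j)⁻¹ = s j (i j) ^ (p j)⁻¹ / x j (i j) := by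
      intro j
      show (s j (i j) / x j (i j) ^ p j) ^ (p j)⁻¹ = _
      rw [Real.div_rpow (hs j (i j)).le (Real.rpow_nonneg (hpos j (i j)).le _),
        ← Real.rpow_mul (hpos j (i j)).le, mul_inv_cancel₀ (hppos j).ne', Real.rpow_one]
    rw [Finset.prod_congr rfl fun j _ => hfac j, Finset.prod_div_distrib]
    show _ = (∏ j, x j (i j)) * _
    rw [mul_comm, div_mul_cancel₀]
    exact (hXpos i).ne'
  have hamgm : ∀ i, (∏ j, r i j ^ (p j)⁻¹ ≤ A i) ∧
      ((∏ j, r i j ^ (p j)⁻¹ = A i) → ∀ j, r i j = A i) :=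
    fun i => PF_amgm hd0 (fun j => (p j)⁻¹) (r i) (fun j => inv_pos.mpr (hppos j)) hW (hrpos i)
  have hterm_le : ∀ i, f i * ∏ j, s j (i j) ^ (p j)⁻¹ ≤ f i * (X i * A i) := by
    intro i
    refine mul_le_mul_of_nonneg_left ?_ (hf i)
    rw [hprod i]
    exact mul_le_mul_of_nonneg_left (hamgm i).1 (hXpos i).le
  have inner_eq : ∀ j : Fin d, ∑ i, f i * (X i * r i j) = lam := by
    intro j
    have e1 : ∀ i : ∀ l, Fin (m l), f i * (X i * r i j)
        = f i * ((fun a => x j a * (s j a / x j a ^ p j)) (i j)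
            * ∏ l ∈ Finset.univ.erase j, x l (i l)) := by
      intro i
      show f i * ((∏ l, x l (i l)) * _) = _
      rw [← Finset.mul_prod_erase Finset.univ (fun l => x l (i l)) (Finset.mem_univ j)]
      ring
    rw [Finset.sum_congr rfl fun i _ => e1 i,
      PF_fiber f x j (fun a => x j a * (s j a / x j a ^ p j))]
    have e2 : ∀ a : Fin (m j),
        x j a * (s j a / x j a ^ p j) * (lam * x j a ^ (p j - 1)) = lam * s j a := by
      intro a
      have hxp : (0:ℝ) < x j a ^ p j := Real.rpow_pos_of_pos (hpos j a) _
      have e : x j a * x j a ^ (p j - 1) = x j a ^ p j := by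
        have e0 := (Real.rpow_add (hpos j a) 1 (p j - 1)).symm
        rw [Real.rpow_one] at e0
        rw [e0, show (1:ℝ) + (p j - 1) = p j by ring]
      calc x j a * (s j a / x j a ^ p j) * (lam * x j a ^ (p j - 1))
          = lam * s j a * ((x j a * x j a ^ (p j - 1)) / x j a ^ p j) := by ring
        _ = lam * s j a * (x j a ^ p j / x j a ^ p j) := by rw [e]
        _ = lam * s j a := by rw [div_self hxp.ne', mul_one]
    calc ∑ a, x j a * (s j a / x j a ^ p j)
          * ∑ i ∈ Finset.univ.filter (fun i : ∀ l, Fin (m l) => i j = a),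
              f i * ∏ l ∈ Finset.univ.erase j, x l (i l)
        = ∑ a, lam * s j a := by
          refine Finset.sum_congr rfl fun a _ => ?_
          rw [heig j a, e2 a]
      _ = lam := by rw [← Finset.mul_sum, hsn j, mul_one]
  have flam : ∑ i, f i * X i = lam := by
    have := PF_lam f p x lam hpos ⟨0, hd0⟩ (hppos _) (hnorm _) (heig _)
    simpa using this
  have expand : ∀ i, f i * (X i * A i)
      = (∑ j, (p j)⁻¹ * (f i * (X i * r i j))) + (1 - W) * (f i * X i) := by
    intro i
    have e3 : f i * (X i * (∑ j, (p j)⁻¹ * r i j))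
        = ∑ j, (p j)⁻¹ * (f i * (X i * r i j)) := by
      rw [Finset.mul_sum, Finset.mul_sum]
      exact Finset.sum_congr rfl fun j _ => by ring
    calc f i * (X i * A i)
        = f i * (X i * (∑ j, (p j)⁻¹ * r i j)) + (1 - W) * (f i * X i) := by
          show f i * (X i * (_ + (1 - W))) = _
          ring
      _ = _ := by rw [e3]
  have total : ∑ i, f i * (X i * A i) = lam := by
    calc ∑ i, f i * (X i * A i)
        = ∑ i, ((∑ j, (p j)⁻¹ * (f i * (X i * r i j))) + (1 - W) * (f i * X i)) :=
          Finset.sum_congr rfl fun i _ => expand i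
      _ = (∑ i, ∑ j, (p j)⁻¹ * (f i * (X i * r i j))) + ∑ i, (1 - W) * (f i * X i) :=
          Finset.sum_add_distrib
      _ = (∑ j : Fin d, ∑ i, (p j)⁻¹ * (f i * (X i * r i j))) + (1 - W) * ∑ i, f i * X i := by
          rw [Finset.sum_comm, ← Finset.mul_sum]
      _ = (∑ j : Fin d, (p j)⁻¹ * lam) + (1 - W) * lam := by
          rw [flam]
          congr 1
          refine Finset.sum_congr rfl fun j _ => ?_
          rw [← Finset.mul_sum, inner_eq j]
      _ = W * lam + (1 - W) * lam := by rw [← Finset.sum_mul, hW_def]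
      _ = lam := by ring
  have hle : PFobj f p s ≤ lam := by
    rw [show lam = ∑ i, f i * (X i * A i) from total.symm]
    exact Finset.sum_le_sum fun i _ => hterm_le i
  refine ⟨hle, ?_⟩
  intro heq i0 hfi0 j k
  by_contra hne
  have h1 : ∏ j, r i0 j ^ (p j)⁻¹ ≠ A i0 := by
    intro h
    exact hne (((hamgm i0).2 h j).trans ((hamgm i0).2 h k).symm)
  have h2 : ∏ j, r i0 j ^ (p j)⁻¹ < A i0 := lt_of_le_of_ne (hamgm i0).1 h1
  have hstrict : f i0 * ∏ j, s j (i0 j) ^ (p j)⁻¹ < f i0 * (X i0 * A i0) := by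
    rw [hprod i0]
    exact mul_lt_mul_of_pos_left (mul_lt_mul_of_pos_left h2 (hXpos i0)) hfi0
  have hlt : PFobj f p s < ∑ i, f i * (X i * A i) :=
    Finset.sum_lt_sum (fun i _ => hterm_le i) ⟨i0, Finset.mem_univ i0, hstrict⟩
  rw [total, heq] at hlt
  exact lt_irrefl _ hlt

lemma PF_unique {d : ℕ} (hd : 2 ≤ d) {m : Fin d → ℕ} (hm : ∀ j, 2 ≤ m j)
    (f : (∀ j, Fin (m j)) → ℝ) (hf : ∀ i, 0 ≤ f i)
    (hweak : (tensorGraph f).Connected)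
    (p : Fin d → ℝ) (hp : ∀ j, (d : ℝ) ≤ p j)
    (x x' : ∀ j, Fin (m j) → ℝ) (lam lam' : ℝ)
    (hpos : ∀ j a, 0 < x j a)
    (hnorm : ∀ j, ∑ a, x j a ^ p j = 1)
    (heig : ∀ (j : Fin d) (a : Fin (m j)),
      (∑ i ∈ Finset.univ.filter (fun i : ∀ l, Fin (m l) => i j = a),
          f i * ∏ l ∈ Finset.univ.erase j, x l (i l)) = lam * x j a ^ (p j - 1))
    (hpos' : ∀ j a, 0 < x' j a)
    (hnorm' : ∀ j, ∑ a, x' j a ^ p j = 1)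
    (heig' : ∀ (j : Fin d) (a : Fin (m j)),
      (∑ i ∈ Finset.univ.filter (fun i : ∀ l, Fin (m l) => i j = a),
          f i * ∏ l ∈ Finset.univ.erase j, x' l (i l)) = lam' * x' j a ^ (p j - 1)) :
    x' = x := by
  classical
  have hd0 : 0 < d := by omega
  have hdR : (0:ℝ) < d := by exact_mod_cast hd0
  have hppos : ∀ j, 0 < p j := fun j => lt_of_lt_of_le hdR (hp j)
  -- the objective value of a solution equals its eigenvalue
  have hval : ∀ (y : ∀ j, Fin (m j) → ℝ) (mu : ℝ), (∀ j a, 0 < y j a) →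
      (∀ j, ∑ a, y j a ^ p j = 1) →
      (∀ (j : Fin d) (a : Fin (m j)),
        (∑ i ∈ Finset.univ.filter (fun i : ∀ l, Fin (m l) => i j = a),
            f i * ∏ l ∈ Finset.univ.erase j, y l (i l)) = mu * y j a ^ (p j - 1)) →
      PFobj f p (fun j a => y j a ^ p j) = mu := by
    intro y mu hy hyn hye
    have hstep : ∀ (j : Fin d) (a : Fin (m j)), (y j a ^ p j) ^ (p j)⁻¹ = y j a := fun j a => by
      rw [← Real.rpow_mul (hy j a).le, mul_inv_cancel₀ (hppos j).ne', Real.rpow_one]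
    have : PFobj f p (fun j a => y j a ^ p j) = ∑ i, f i * ∏ l, y l (i l) := by
      unfold PFobj
      exact Finset.sum_congr rfl fun i _ => by
        rw [Finset.prod_congr rfl fun j _ => hstep j (i j)]
    rw [this]
    exact PF_lam f p y mu hy ⟨0, hd0⟩ (hppos _) (hyn _) (hye _)
  have hv' : PFobj f p (fun j a => x' j a ^ p j) = lam' := hval x' lam' hpos' hnorm' heig'
  have hv : PFobj f p (fun j a => x j a ^ p j) = lam := hval x lam hpos hnorm heig
  have ht1 := PF_tangent hd f hf p hp x lam hpos hnorm heig
    (fun j a => x' j a ^ p j) (fun j a => Real.rpow_pos_of_pos (hpos' j a) _) hnorm'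
  have ht2 := PF_tangent hd f hf p hp x' lam' hpos' hnorm' heig'
    (fun j a => x j a ^ p j) (fun j a => Real.rpow_pos_of_pos (hpos j a) _) hnorm
  have hlam : lam' = lam := le_antisymm (hv' ▸ ht1.1) (hv ▸ ht2.1)
  have hratio := ht1.2 (by rw [hv', hlam])
  -- the ratio function is constant on the connected tensor graph
  set ρ : (Σ j : Fin d, Fin (m j)) → ℝ :=
    fun v => x' v.1 v.2 ^ p v.1 / x v.1 v.2 ^ p v.1 with hρ_def
  have hadj : ∀ u v, (tensorGraph f).Adj u v → ρ u = ρ v := by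
    rintro ⟨j1, a1⟩ ⟨j2, a2⟩ ⟨hne, i, hiu, hiv, hfi⟩
    have := hratio i hfi j1 j2
    dsimp at hiu hiv ⊢
    rw [hiu, hiv] at this
    exact this
  have hconst : ∀ u v, ρ u = ρ v := by
    intro u v
    obtain ⟨w⟩ := hweak.preconnected u v
    exact PF_walk_const hadj w
  have hxpne : ∀ (j : Fin d) (a : Fin (m j)), x j a ^ p j ≠ 0 :=
    fun j a => (Real.rpow_pos_of_pos (hpos j a) _).ne'
  set v0 : Σ j : Fin d, Fin (m j) := ⟨⟨0, hd0⟩, ⟨0, by have := hm ⟨0, hd0⟩; omega⟩⟩ with hv0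
  set c : ℝ := ρ v0 with hc
  have hrel : ∀ (j : Fin d) (a : Fin (m j)), x' j a ^ p j = c * x j a ^ p j := by
    intro j a
    have h1 : ρ ⟨j, a⟩ = c := hconst ⟨j, a⟩ v0
    dsimp [ρ] at h1
    exact (div_eq_iff (hxpne j a)).mp h1
  have hc1 : c = 1 := by
    have h1 : (1:ℝ) = ∑ a, x' (⟨0, hd0⟩ : Fin d) a ^ p ⟨0, hd0⟩ := (hnorm' _).symm
    rw [Finset.sum_congr rfl fun a _ => hrel ⟨0, hd0⟩ a, ← Finset.mul_sum, hnorm _, mul_one] at h1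
    exact h1.symm
  funext j a
  have h2 : x' j a ^ p j = x j a ^ p j := by rw [hrel j a, hc1, one_mul]
  exact Real.rpow_left_injOn (hppos j).ne' (Set.mem_setOf.mpr (hpos' j a).le)
    (Set.mem_setOf.mpr (hpos j a).le) h2

lemma PF_max_pos {d : ℕ} (hd : 2 ≤ d) {m : Fin d → ℕ} (hm : ∀ j, 2 ≤ m j)
    (f : (∀ j, Fin (m j)) → ℝ) (hf : ∀ i, 0 ≤ f i)
    (hweak : (tensorGraph f).Connected)
    (p : Fin d → ℝ) (hp : ∀ j, (d : ℝ) ≤ p j)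
    (t : ∀ j, Fin (m j) → ℝ)
    (htS : ∀ j, t j ∈ stdSimplex ℝ (Fin (m j)))
    (htmax : ∀ s : ∀ j, Fin (m j) → ℝ, (∀ j, s j ∈ stdSimplex ℝ (Fin (m j))) →
      PFobj f p s ≤ PFobj f p t) :
    ∀ j a, 0 < t j a := by
  classical
  have hd0 : 0 < d := by omega
  have hdR : (0:ℝ) < d := by exact_mod_cast hd0
  have hppos : ∀ j, 0 < p j := fun j => lt_of_lt_of_le hdR (hp j)
  have hw : ∀ j : Fin d, 0 < (p j)⁻¹ := fun j => inv_pos.mpr (hppos j)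
  by_contra hcon
  push_neg at hcon
  obtain ⟨j0, a0, ha0⟩ := hcon
  have ht0 : t j0 a0 = 0 := le_antisymm ha0 ((htS j0).1 a0)
  -- each block has a positive coordinate
  have hblock : ∀ j, ∃ b, 0 < t j b := by
    intro j
    by_contra hb
    push_neg at hb
    have : ∑ a, t j a = 0 := le_antisymm (Finset.sum_nonpos fun a _ => hb a)
      (Finset.sum_nonneg fun a _ => (htS j).1 a)
    rw [(htS j).2] at this
    norm_num at this
  obtain ⟨b0, hb0⟩ := hblock j0
  set P : (Σ j : Fin d, Fin (m j)) → Prop := fun v => 0 < t v.1 v.2 with hP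
  obtain ⟨wlk⟩ := hweak.preconnected ⟨j0, a0⟩ ⟨j0, b0⟩
  obtain ⟨u, v, hadj, hPu, hPv⟩ := PF_walk_cross P wlk (by simpa [hP] using ha0.not_gt) hb0
  obtain ⟨hne, istar, hiu, hiv, hfi⟩ := hadj
  have htu : t u.1 u.2 = 0 := le_antisymm (not_lt.mp hPu) ((htS u.1).1 u.2)
  have htv : 0 < t v.1 v.2 := hPv
  -- uniform point
  set t0 : ∀ j, Fin (m j) → ℝ := fun j _ => ((m j : ℝ))⁻¹ with ht0_def
  have hmpos : ∀ j, (0:ℝ) < (m j : ℝ) := fun j => by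
    have := hm j; positivity
  have ht0S : ∀ j, t0 j ∈ stdSimplex ℝ (Fin (m j)) := by
    intro j
    refine ⟨fun a => by positivity, ?_⟩
    rw [Finset.sum_const, Finset.card_univ, Fintype.card_fin, nsmul_eq_mul,
      mul_inv_cancel₀ (hmpos j).ne']
  set θ : ℝ := ∑ k ∈ Finset.univ.erase v.1, (p k)⁻¹ with hθ_def
  have hθW : θ + (p v.1)⁻¹ = ∑ j, (p j)⁻¹ :=
    Finset.sum_erase_add Finset.univ _ (Finset.mem_univ v.1)
  have hW1 : ∑ j, (p j)⁻¹ ≤ 1 := PF_Wle hd p hp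
  have hθ1 : θ < 1 := by
    have := hw v.1
    linarith
  have herase_ne : (Finset.univ.erase v.1).Nonempty := by
    have hcard : (Finset.univ.erase v.1).card = d - 1 := by
      rw [Finset.card_erase_of_mem (Finset.mem_univ v.1), Finset.card_univ, Fintype.card_fin]
    rw [← Finset.card_pos, hcard]
    omega
  have hθpos : 0 < θ := Finset.sum_pos (fun k _ => hw k) herase_ne
  set C : ℝ := f istar * ((t v.1 v.2 / 2) ^ (p v.1)⁻¹
    * ∏ k ∈ Finset.univ.erase v.1, ((m k : ℝ))⁻¹ ^ (p k)⁻¹) with hC_def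
  have hCpos : 0 < C := by
    refine mul_pos hfi (mul_pos ?_ ?_)
    · exact Real.rpow_pos_of_pos (by linarith) _
    · exact Finset.prod_pos fun k _ => Real.rpow_pos_of_pos (inv_pos.mpr (hmpos k)) _
  set M : ℝ := PFobj f p t with hM_def
  have hM0 : 0 ≤ M := by
    refine Finset.sum_nonneg fun i _ => mul_nonneg (hf i) ?_
    exact Finset.prod_nonneg fun k _ => Real.rpow_nonneg ((htS k).1 (i k)) _
  -- the key estimate
  have hkey : ∀ ε : ℝ, 0 < ε → ε ≤ 1/2 → (1 - ε) * M + C * ε ^ θ ≤ M := by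
    intro ε hε0 hε12
    set s : ∀ j, Fin (m j) → ℝ := fun j a => (1 - ε) * t j a + ε * t0 j a with hs_def
    have hsS : ∀ j, s j ∈ stdSimplex ℝ (Fin (m j)) := by
      intro j
      constructor
      · intro a
        have h1 := (htS j).1 a
        have h2 : (0:ℝ) < (m j : ℝ)⁻¹ := inv_pos.mpr (hmpos j)
        have : (0:ℝ) ≤ (1 - ε) * t j a := by nlinarith
        have h3 : (0:ℝ) ≤ ε * t0 j a := by
          dsimp [t0]; positivity
        dsimp [s]; linarith
      · dsimp [s]
        rw [Finset.sum_add_distrib, ← Finset.mul_sum, ← Finset.mul_sum, (htS j).2,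
          (ht0S j).2]
        ring
    have hslb : ∀ j a, (1 - ε) * t j a ≤ s j a := by
      intro j a
      dsimp [s, t0]
      have : (0:ℝ) ≤ ε * (m j : ℝ)⁻¹ := by positivity
      linarith
    have hslb2 : ∀ j a, ε * (m j : ℝ)⁻¹ ≤ s j a := by
      intro j a
      dsimp [s, t0]
      have h1 := (htS j).1 a
      nlinarith [h1, hε0, hε12]
    have hs0 : ∀ j a, 0 ≤ s j a := fun j a => (hsS j).1 a
    -- bound for generic terms
    have hgen : ∀ i : ∀ l, Fin (m l),
        (1 - ε) * ∏ k, t k (i k) ^ (p k)⁻¹ ≤ ∏ k, s k (i k) ^ (p k)⁻¹ := by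
      intro i
      have step1 : ∏ k, ((1 - ε) * t k (i k)) ^ (p k)⁻¹ ≤ ∏ k, s k (i k) ^ (p k)⁻¹ := by
        refine Finset.prod_le_prod (fun k _ => Real.rpow_nonneg ?_ _)
          (fun k _ => Real.rpow_le_rpow ?_ (hslb k (i k)) (hw k).le)
        · have := (htS k).1 (i k); nlinarith
        · have := (htS k).1 (i k); nlinarith
      have step2 : ∏ k, ((1 - ε) * t k (i k)) ^ (p k)⁻¹
          = (1 - ε) ^ (∑ k, (p k)⁻¹) * ∏ k, t k (i k) ^ (p k)⁻¹ := by
        rw [PF_rpow_sum (by linarith : (0:ℝ) < 1 - ε), ← Finset.prod_mul_distrib]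
        exact Finset.prod_congr rfl fun k _ =>
          Real.mul_rpow (by linarith) ((htS k).1 (i k))
      have step3 : (1 - ε) ≤ (1 - ε) ^ (∑ k, (p k)⁻¹) := by
        have := Real.rpow_le_rpow_of_exponent_ge (by linarith : (0:ℝ) < 1 - ε)
          (by linarith : (1:ℝ) - ε ≤ 1) hW1
        rwa [Real.rpow_one] at this
      have step4 : (1 - ε) * ∏ k, t k (i k) ^ (p k)⁻¹
          ≤ (1 - ε) ^ (∑ k, (p k)⁻¹) * ∏ k, t k (i k) ^ (p k)⁻¹ := by
        refine mul_le_mul_of_nonneg_right step3 ?_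
        exact Finset.prod_nonneg fun k _ => Real.rpow_nonneg ((htS k).1 (i k)) _
      calc (1 - ε) * ∏ k, t k (i k) ^ (p k)⁻¹
          ≤ (1 - ε) ^ (∑ k, (p k)⁻¹) * ∏ k, t k (i k) ^ (p k)⁻¹ := step4
        _ = ∏ k, ((1 - ε) * t k (i k)) ^ (p k)⁻¹ := step2.symm
        _ ≤ ∏ k, s k (i k) ^ (p k)⁻¹ := step1
    -- bound for the special term
    have hspec : C * ε ^ θ ≤ f istar * ∏ k, s k (istar k) ^ (p k)⁻¹ := by
      have hsplit : ∏ k, s k (istar k) ^ (p k)⁻¹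
          = s v.1 (istar v.1) ^ (p v.1)⁻¹
            * ∏ k ∈ Finset.univ.erase v.1, s k (istar k) ^ (p k)⁻¹ :=
        (Finset.mul_prod_erase Finset.univ _ (Finset.mem_univ v.1)).symm
      have hfac1 : (t v.1 v.2 / 2) ^ (p v.1)⁻¹ ≤ s v.1 (istar v.1) ^ (p v.1)⁻¹ := by
        refine Real.rpow_le_rpow (by linarith) ?_ (hw v.1).le
        rw [hiv]
        have h21 := hslb v.1 v.2
        have h20 : ε * t v.1 v.2 ≤ (1/2) * t v.1 v.2 :=
          mul_le_mul_of_nonneg_right hε12 htv.le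
        nlinarith [h21, h20, mul_pos hε0 (inv_pos.mpr (hmpos v.1))]
      have hfac2 : ∏ k ∈ Finset.univ.erase v.1, (ε * (m k : ℝ)⁻¹) ^ (p k)⁻¹
          ≤ ∏ k ∈ Finset.univ.erase v.1, s k (istar k) ^ (p k)⁻¹ := by
        refine Finset.prod_le_prod (fun k _ => Real.rpow_nonneg (by positivity) _)
          (fun k _ => Real.rpow_le_rpow (by positivity) (hslb2 k (istar k)) (hw k).le)
      have hfac2' : ∏ k ∈ Finset.univ.erase v.1, (ε * (m k : ℝ)⁻¹) ^ (p k)⁻¹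
          = ε ^ θ * ∏ k ∈ Finset.univ.erase v.1, ((m k : ℝ))⁻¹ ^ (p k)⁻¹ := by
        rw [hθ_def, PF_rpow_sum hε0, ← Finset.prod_mul_distrib]
        exact Finset.prod_congr rfl fun k _ => Real.mul_rpow hε0.le (by positivity)
      calc C * ε ^ θ
          = f istar * ((t v.1 v.2 / 2) ^ (p v.1)⁻¹
            * (ε ^ θ * ∏ k ∈ Finset.univ.erase v.1, ((m k : ℝ))⁻¹ ^ (p k)⁻¹)) := by
            rw [hC_def]; ring
        _ ≤ f istar * (s v.1 (istar v.1) ^ (p v.1)⁻¹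
            * ∏ k ∈ Finset.univ.erase v.1, s k (istar k) ^ (p k)⁻¹) := by
            refine mul_le_mul_of_nonneg_left ?_ (hf istar)
            refine mul_le_mul hfac1 (le_trans (le_of_eq hfac2'.symm) hfac2) ?_ ?_
            · exact mul_nonneg (Real.rpow_nonneg hε0.le _)
                (Finset.prod_nonneg fun k _ => Real.rpow_nonneg (by positivity) _)
            · exact Real.rpow_nonneg (hs0 v.1 (istar v.1)) _
        _ = f istar * ∏ k, s k (istar k) ^ (p k)⁻¹ := by rw [← hsplit]
    -- the special term vanishes at t
    have hvanish : f istar * ∏ k, t k (istar k) ^ (p k)⁻¹ = 0 := by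
      have : t u.1 (istar u.1) ^ (p u.1)⁻¹ = 0 := by
        rw [hiu, htu, Real.zero_rpow (hw u.1).ne']
      rw [Finset.prod_eq_zero (Finset.mem_univ u.1) this, mul_zero]
    -- combine
    have hsum : (1 - ε) * M + C * ε ^ θ ≤ PFobj f p s := by
      have e1 : PFobj f p s = f istar * ∏ k, s k (istar k) ^ (p k)⁻¹
          + ∑ i ∈ Finset.univ.erase istar, f i * ∏ k, s k (i k) ^ (p k)⁻¹ := by
        unfold PFobj
        rw [← Finset.add_sum_erase Finset.univ
          (fun i : ∀ l, Fin (m l) => f i * ∏ k, s k (i k) ^ (p k)⁻¹)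
          (Finset.mem_univ istar)]
      have e2 : M = f istar * ∏ k, t k (istar k) ^ (p k)⁻¹
          + ∑ i ∈ Finset.univ.erase istar, f i * ∏ k, t k (i k) ^ (p k)⁻¹ := by
        rw [hM_def]
        unfold PFobj
        rw [← Finset.add_sum_erase Finset.univ
          (fun i : ∀ l, Fin (m l) => f i * ∏ k, t k (i k) ^ (p k)⁻¹)
          (Finset.mem_univ istar)]
      have e3 : ∑ i ∈ Finset.univ.erase istar, (1 - ε) * (f i * ∏ k, t k (i k) ^ (p k)⁻¹)
          ≤ ∑ i ∈ Finset.univ.erase istar, f i * ∏ k, s k (i k) ^ (p k)⁻¹ := by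
        refine Finset.sum_le_sum fun i _ => ?_
        have := hgen i
        have h9 : f i * ((1 - ε) * ∏ k, t k (i k) ^ (p k)⁻¹)
            ≤ f i * ∏ k, s k (i k) ^ (p k)⁻¹ :=
          mul_le_mul_of_nonneg_left (hgen i) (hf i)
        calc (1 - ε) * (f i * ∏ k, t k (i k) ^ (p k)⁻¹)
            = f i * ((1 - ε) * ∏ k, t k (i k) ^ (p k)⁻¹) := by ring
          _ ≤ _ := h9
      have e5 : (1 - ε) * M = (1 - ε) * (f istar * ∏ k, t k (istar k) ^ (p k)⁻¹)
          + ∑ i ∈ Finset.univ.erase istar, (1 - ε) * (f i * ∏ k, t k (i k) ^ (p k)⁻¹) := by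
        rw [e2, mul_add, Finset.mul_sum]
      calc (1 - ε) * M + C * ε ^ θ
          = C * ε ^ θ + ((1 - ε) * (f istar * ∏ k, t k (istar k) ^ (p k)⁻¹)
            + ∑ i ∈ Finset.univ.erase istar, (1 - ε) * (f i * ∏ k, t k (i k) ^ (p k)⁻¹)) := by
            rw [e5]
            ring
        _ = C * ε ^ θ
            + ∑ i ∈ Finset.univ.erase istar, (1 - ε) * (f i * ∏ k, t k (i k) ^ (p k)⁻¹) := by
            rw [hvanish]
            ring
        _ ≤ f istar * ∏ k, s k (istar k) ^ (p k)⁻¹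
            + ∑ i ∈ Finset.univ.erase istar, f i * ∏ k, s k (i k) ^ (p k)⁻¹ :=
            add_le_add hspec e3
        _ = PFobj f p s := e1.symm
    exact le_trans hsum (htmax s hsS)
  -- derive the contradiction by choosing ε small
  set β : ℝ := 1 - θ with hβ_def
  have hβpos : 0 < β := by rw [hβ_def]; linarith
  set ε : ℝ := min (1/2) ((C / (M + 1)) ^ β⁻¹) with hε_def
  have hCM : 0 < C / (M + 1) := div_pos hCpos (by linarith)
  have hεpos : 0 < ε := lt_min (by norm_num) (Real.rpow_pos_of_pos hCM _)
  have hε12 : ε ≤ 1/2 := min_le_left _ _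
  have h10 : C * ε ^ θ ≤ ε * M := by
    have hk := hkey ε hεpos hε12
    have he : (1 - ε) * M = M - ε * M := by ring
    linarith [hk, he.le, he.ge]
  have h11 : ε ^ θ > 0 := Real.rpow_pos_of_pos hεpos _
  have h12 : C ≤ ε ^ β * M := by
    have e4 : ε ^ θ * ε ^ β = ε := by
      have hθβ : θ + β = 1 := by rw [hβ_def]; ring
      rw [← Real.rpow_add hεpos, hθβ, Real.rpow_one]
    have h10' : ε ^ θ * C ≤ ε ^ θ * (ε ^ β * M) := by
      calc ε ^ θ * C = C * ε ^ θ := mul_comm _ _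
        _ ≤ ε * M := h10
        _ = ε ^ θ * (ε ^ β * M) := by rw [← mul_assoc, e4]
    exact le_of_mul_le_mul_left h10' h11
  have h13 : ε ^ β ≤ C / (M + 1) := by
    have h14 : ε ≤ (C / (M + 1)) ^ β⁻¹ := min_le_right _ _
    have h15 := Real.rpow_le_rpow hεpos.le h14 hβpos.le
    rwa [← Real.rpow_mul hCM.le, inv_mul_cancel₀ hβpos.ne', Real.rpow_one] at h15
  have h16 : ε ^ β * M ≤ C / (M + 1) * M :=
    mul_le_mul_of_nonneg_right h13 hM0
  have h17 : C / (M + 1) * M < C := by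
    rw [div_mul_eq_mul_div, div_lt_iff₀ (by linarith : (0:ℝ) < M + 1)]
    nlinarith
  linarith

lemma PF_max_stationary {d : ℕ} {m : Fin d → ℕ}
    (f : (∀ j, Fin (m j)) → ℝ) (p : Fin d → ℝ) (hppos : ∀ j, 0 < p j)
    (t : ∀ j, Fin (m j) → ℝ) (htpos : ∀ j a, 0 < t j a)
    (htmax : ∀ s : ∀ j, Fin (m j) → ℝ, (∀ j, s j ∈ stdSimplex ℝ (Fin (m j))) →
      PFobj f p s ≤ PFobj f p t)
    (htS : ∀ j, t j ∈ stdSimplex ℝ (Fin (m j))) :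
    ∀ (j : Fin d) (a b : Fin (m j)),
      t j a ^ ((p j)⁻¹ - 1) * (∑ i ∈ Finset.univ.filter (fun i : ∀ l, Fin (m l) => i j = a),
          f i * ∏ l ∈ Finset.univ.erase j, t l (i l) ^ (p l)⁻¹)
      = t j b ^ ((p j)⁻¹ - 1) * (∑ i ∈ Finset.univ.filter (fun i : ∀ l, Fin (m l) => i j = b),
          f i * ∏ l ∈ Finset.univ.erase j, t l (i l) ^ (p l)⁻¹) := by
  classical
  intro j a b
  rcases eq_or_ne a b with rfl | hab
  · rfl
  set w : ℝ := (p j)⁻¹ with hw_def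
  set K : (∀ l, Fin (m l)) → ℝ :=
    fun i => ∏ l ∈ Finset.univ.erase j, t l (i l) ^ (p l)⁻¹ with hK_def
  set g : ℝ → Fin (m j) → ℝ :=
    fun ε c => t j c + (if c = a then ε else if c = b then -ε else 0) with hg_def
  set T : ℝ → ∀ l, Fin (m l) → ℝ := fun ε => Function.update t j (g ε) with hT_def
  set φ : ℝ → ℝ := fun ε => PFobj f p (T ε) with hφ_def
  have hg0 : g 0 = t j := by
    funext c; simp [hg_def]
  have hT0 : T 0 = t := by rw [hT_def]; dsimp only; rw [hg0]; exact Function.update_eq_self j t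
  set δ : ℝ := min (t j a) (t j b) with hδ_def
  have hδpos : 0 < δ := lt_min (htpos j a) (htpos j b)
  -- the perturbed point stays in the simplex
  have hTS : ∀ ε : ℝ, |ε| < δ → ∀ l, T ε l ∈ stdSimplex ℝ (Fin (m l)) := by
    intro ε hε l
    rcases eq_or_ne l j with h | hlj
    · rw [h]
      rw [hT_def]; dsimp only; rw [Function.update_self]
      constructor
      · intro c
        dsimp [g]
        split_ifs with h1 h2
        · rw [h1]
          have h6 := (abs_lt.mp hε).1
          have h7 := min_le_left (t j a) (t j b)
          linarith
        · rw [h2]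
          have h6 := (abs_lt.mp hε).2
          have h7 := min_le_right (t j a) (t j b)
          linarith
        · have := (htS j).1 c; linarith
      · have hsplit : ∀ c : Fin (m j), g ε c
            = t j c + ((if c = a then ε else 0) + (if c = b then -ε else 0)) := by
          intro c
          dsimp [g]
          split_ifs with h1 h2 <;> simp_all
        rw [Finset.sum_congr rfl fun c _ => hsplit c]
        rw [Finset.sum_add_distrib, Finset.sum_add_distrib,
          Finset.sum_ite_eq' Finset.univ a (fun _ => ε),
          Finset.sum_ite_eq' Finset.univ b (fun _ => -ε)]
        simp [(htS j).2]
    · rw [hT_def]; dsimp only; rw [Function.update_of_ne hlj]; exact htS l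
  have hlocmax : IsLocalMax φ 0 := by
    refine Filter.eventually_of_mem (Metric.ball_mem_nhds (0:ℝ) hδpos) ?_
    intro ε hε
    rw [mem_ball_zero_iff, Real.norm_eq_abs] at hε
    have h1 : φ ε ≤ PFobj f p t := htmax (T ε) (hTS ε hε)
    rw [hφ_def]; dsimp only; rw [hT0]
    exact h1
  -- rewrite φ in a differentiable form
  have hφ_eq : ∀ ε, φ ε = ∑ i : ∀ l, Fin (m l), f i * (g ε (i j) ^ w * K i) := by
    intro ε
    rw [hφ_def]; dsimp only
    unfold PFobj
    refine Finset.sum_congr rfl fun i _ => ?_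
    congr 1
    rw [← Finset.mul_prod_erase Finset.univ (fun l => T ε l (i l) ^ (p l)⁻¹)
        (Finset.mem_univ j)]
    have h2 : T ε j (i j) = g ε (i j) := by rw [hT_def]; dsimp only; rw [Function.update_self]
    have h3 : ∀ l ∈ Finset.univ.erase j, T ε l (i l) ^ (p l)⁻¹ = t l (i l) ^ (p l)⁻¹ := by
      intro l hl
      rw [hT_def]; dsimp only; rw [Function.update_of_ne (Finset.mem_erase.mp hl).1]
    rw [h2, Finset.prod_congr rfl h3, hK_def]
  set σ : (∀ l, Fin (m l)) → ℝ :=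
    fun i => if i j = a then (1:ℝ) else if i j = b then -1 else 0 with hσ_def
  have hderiv : HasDerivAt φ
      (∑ i : ∀ l, Fin (m l), f i * ((w * t j (i j) ^ (w - 1) * σ i) * K i)) 0 := by
    rw [show φ = fun ε => ∑ i : ∀ l, Fin (m l), f i * (g ε (i j) ^ w * K i) from
      funext hφ_eq]
    refine HasDerivAt.fun_sum fun i _ => ?_
    have hinner : HasDerivAt (fun ε => g ε (i j)) (σ i) 0 := by
      dsimp [g, σ]
      rcases eq_or_ne (i j) a with h1 | h1
      · simp only [if_pos h1]
        exact (hasDerivAt_id 0).const_add (t j (i j))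
      · rcases eq_or_ne (i j) b with h2 | h2
        · simp only [if_neg h1, if_pos h2]
          exact ((hasDerivAt_id 0).neg).const_add (t j (i j))
        · simp only [if_neg h1, if_neg h2]
          exact hasDerivAt_const 0 (t j (i j) + 0)
    have hg0i : g 0 (i j) = t j (i j) := by rw [hg0]
    have hrpow : HasDerivAt (fun ε => g ε (i j) ^ w)
        (w * t j (i j) ^ (w - 1) * σ i) 0 := by
      have h8 := hinner.rpow_const (p := w) (by rw [hg0i]; exact Or.inl (htpos j (i j)).ne')
      rw [hg0i] at h8
      convert h8 using 1
      ring
    exact ((hrpow.mul_const (K i)).const_mul (f i))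
  have hD0 := hlocmax.hasDerivAt_eq_zero hderiv
  -- split the derivative sum into the two fibers
  have hsplit : ∀ i : ∀ l, Fin (m l),
      f i * ((w * t j (i j) ^ (w - 1) * σ i) * K i)
      = (if i j = a then (w * t j a ^ (w - 1)) * (f i * K i) else 0)
        + (if i j = b then (-(w * t j b ^ (w - 1))) * (f i * K i) else 0) := by
    intro i
    dsimp [σ]
    rcases eq_or_ne (i j) a with h1 | h1
    · rw [if_pos h1, if_pos h1, if_neg (h1 ▸ hab), h1]; ring
    · rcases eq_or_ne (i j) b with h2 | h2
      · rw [if_neg h1, if_pos h2, if_neg h1, if_pos h2, h2]; ring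
      · rw [if_neg h1, if_neg h2, if_neg h1, if_neg h2]; ring
  rw [Finset.sum_congr rfl fun i _ => hsplit i, Finset.sum_add_distrib,
    ← Finset.sum_filter, ← Finset.sum_filter] at hD0
  rw [← Finset.mul_sum, ← Finset.mul_sum] at hD0
  have hw0 : w ≠ 0 := (inv_pos.mpr (hppos j)).ne'
  have h5 : w * (t j a ^ (w - 1) * ∑ i ∈ Finset.univ.filter (fun i : ∀ l, Fin (m l) => i j = a),
        f i * K i)
      = w * (t j b ^ (w - 1) * ∑ i ∈ Finset.univ.filter (fun i : ∀ l, Fin (m l) => i j = b),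
        f i * K i) := by
    linear_combination hD0
  exact mul_left_cancel₀ hw0 h5

lemma PF_exists {d : ℕ} (hd : 2 ≤ d) {m : Fin d → ℕ} (hm : ∀ j, 2 ≤ m j)
    (f : (∀ j, Fin (m j)) → ℝ) (hf : ∀ i, 0 ≤ f i)
    (hweak : (tensorGraph f).Connected)
    (p : Fin d → ℝ) (hp : ∀ j, (d : ℝ) ≤ p j) :
    ∃ x : ∀ j, Fin (m j) → ℝ,
      (∀ j a, 0 < x j a) ∧
      (∀ j, ∑ a, x j a ^ p j = 1) ∧
      ∃ lam : ℝ,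
        ∀ (j : Fin d) (a : Fin (m j)),
          (∑ i ∈ Finset.univ.filter (fun i : ∀ l, Fin (m l) => i j = a),
              f i * ∏ l ∈ Finset.univ.erase j, x l (i l))
            = lam * x j a ^ (p j - 1) := by
  classical
  have hd0 : 0 < d := by omega
  have hdR : (0:ℝ) < d := by exact_mod_cast hd0
  have hppos : ∀ j, 0 < p j := fun j => lt_of_lt_of_le hdR (hp j)
  have hw : ∀ j : Fin d, 0 < (p j)⁻¹ := fun j => inv_pos.mpr (hppos j)
  -- continuity
  have hcont : Continuous (PFobj f p) := by
    unfold PFobj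
    refine continuous_finset_sum _ fun i _ => continuous_const.mul ?_
    refine continuous_finset_prod _ fun j _ => ?_
    have h1 : Continuous fun t : ∀ j, Fin (m j) → ℝ => t j (i j) :=
      (continuous_apply (i j)).comp (continuous_apply j)
    exact h1.rpow_const fun _ => Or.inr (hw j).le
  -- compact domain
  set S : Set (∀ j, Fin (m j) → ℝ) := Set.univ.pi fun j => stdSimplex ℝ (Fin (m j)) with hS_def
  have hScomp : IsCompact S := isCompact_univ_pi fun j => isCompact_stdSimplex _ _
  have hmpos : ∀ j, (0:ℝ) < (m j : ℝ) := fun j => by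
    have := hm j
    exact_mod_cast Nat.lt_of_lt_of_le Nat.zero_lt_two this
  have ht0S : (fun (j : Fin d) (_ : Fin (m j)) => ((m j : ℝ))⁻¹) ∈ S := by
    rw [hS_def, Set.mem_univ_pi]
    intro j
    refine ⟨fun a => by positivity, ?_⟩
    rw [Finset.sum_const, Finset.card_univ, Fintype.card_fin, nsmul_eq_mul,
      mul_inv_cancel₀ (hmpos j).ne']
  obtain ⟨t, htS, htmax⟩ := hScomp.exists_isMaxOn ⟨_, ht0S⟩ hcont.continuousOn
  have htS' : ∀ j, t j ∈ stdSimplex ℝ (Fin (m j)) := by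
    rw [hS_def, Set.mem_univ_pi] at htS
    exact htS
  have htmax' : ∀ s : ∀ j, Fin (m j) → ℝ, (∀ j, s j ∈ stdSimplex ℝ (Fin (m j))) →
      PFobj f p s ≤ PFobj f p t := by
    intro s hs
    exact htmax (by rw [hS_def, Set.mem_univ_pi]; exact hs)
  have htpos : ∀ j a, 0 < t j a := PF_max_pos hd hm f hf hweak p hp t htS' htmax'
  have hstat := PF_max_stationary f p hppos t htpos htmax' htS'
  -- the eigenvector
  refine ⟨fun j a => t j a ^ (p j)⁻¹, fun j a => Real.rpow_pos_of_pos (htpos j a) _, ?_, ?_⟩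
  · intro j
    have hxt : ∀ a, (t j a ^ (p j)⁻¹) ^ p j = t j a := fun a => by
      rw [← Real.rpow_mul (htpos j a).le, inv_mul_cancel₀ (hppos j).ne', Real.rpow_one]
    rw [Finset.sum_congr rfl fun a _ => hxt a]
    exact (htS' j).2
  · -- eigen equations with lam = objective value
    set K : ∀ j : Fin d, Fin (m j) → ℝ :=
      fun j a => ∑ i ∈ Finset.univ.filter (fun i : ∀ l, Fin (m l) => i j = a),
        f i * ∏ l ∈ Finset.univ.erase j, t l (i l) ^ (p l)⁻¹ with hK_def
    set lam : ℝ := ∑ i, f i * ∏ l, t l (i l) ^ (p l)⁻¹ with hlam_def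
    have hlamΦ : ∀ (j : Fin d) (a : Fin (m j)),
        lam = t j a ^ ((p j)⁻¹ - 1) * K j a := by
      intro j a
      have step1 : lam = ∑ b, t j b ^ (p j)⁻¹ * K j b := by
        rw [hlam_def]
        have e1 : ∀ i : ∀ l, Fin (m l), f i * ∏ l, t l (i l) ^ (p l)⁻¹
            = f i * ((fun b => t j b ^ (p j)⁻¹) (i j)
                * ∏ l ∈ Finset.univ.erase j, t l (i l) ^ (p l)⁻¹) := by
          intro i
          rw [← Finset.mul_prod_erase Finset.univ (fun l => t l (i l) ^ (p l)⁻¹)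
            (Finset.mem_univ j)]
        rw [Finset.sum_congr rfl fun i _ => e1 i,
          PF_fiber f (fun l c => t l c ^ (p l)⁻¹) j (fun b => t j b ^ (p j)⁻¹)]
      have step2 : ∀ b : Fin (m j), t j b ^ (p j)⁻¹ * K j b
          = (t j b ^ ((p j)⁻¹ - 1) * K j b) * t j b := by
        intro b
        have h3 : t j b ^ ((p j)⁻¹ - 1) * t j b = t j b ^ (p j)⁻¹ := by
          nth_rewrite 2 [← Real.rpow_one (t j b)]
          rw [← Real.rpow_add (htpos j b), sub_add_cancel]
        rw [← h3]; ring
      have step3 : ∀ b : Fin (m j), t j b ^ ((p j)⁻¹ - 1) * K j b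
          = t j a ^ ((p j)⁻¹ - 1) * K j a := fun b => hstat j b a
      calc lam = ∑ b, t j b ^ (p j)⁻¹ * K j b := step1
        _ = ∑ b, (t j a ^ ((p j)⁻¹ - 1) * K j a) * t j b := by
            refine Finset.sum_congr rfl fun b _ => ?_
            rw [step2 b, step3 b]
        _ = (t j a ^ ((p j)⁻¹ - 1) * K j a) * ∑ b, t j b := by rw [← Finset.mul_sum]
        _ = t j a ^ ((p j)⁻¹ - 1) * K j a := by rw [(htS' j).2, mul_one]
    refine ⟨lam, fun j a => ?_⟩
    have hwp : (p j)⁻¹ * (p j - 1) = 1 - (p j)⁻¹ := by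
      rw [mul_sub, inv_mul_cancel₀ (hppos j).ne', mul_one]
    have h2 : t j a ^ ((p j)⁻¹ - 1) * t j a ^ (1 - (p j)⁻¹) = 1 := by
      rw [← Real.rpow_add (htpos j a), show (p j)⁻¹ - 1 + (1 - (p j)⁻¹) = 0 by ring,
        Real.rpow_zero]
    have hxpow : (t j a ^ (p j)⁻¹) ^ (p j - 1) = t j a ^ (1 - (p j)⁻¹) := by
      rw [← Real.rpow_mul (htpos j a).le, hwp]
    show K j a = lam * (t j a ^ (p j)⁻¹) ^ (p j - 1)
    rw [hxpow, hlamΦ j a]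
    calc K j a = K j a * (t j a ^ ((p j)⁻¹ - 1) * t j a ^ (1 - (p j)⁻¹)) := by
          rw [h2, mul_one]
      _ = t j a ^ ((p j)⁻¹ - 1) * K j a * t j a ^ (1 - (p j)⁻¹) := by ring

/-- Perron–Frobenius theorem for nonnegative multilinear forms (weakly irreducible
case): if the tensor `f` is nonnegative and weakly irreducible and `p_j ≥ d` for all
`j`, then the eigenvalue system
`∑_{i, i_j fixed} f_i ∏_{l ≠ j} x_{i_l, l} = λ x_{i_j, j}^{p_j - 1}`
subject to `‖x_j‖_{p_j} = 1` has a unique positive solution. -/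
theorem multilinear_PF_weakly_irreducible (d : ℕ) (hd : 2 ≤ d)
    (m : Fin d → ℕ) (hm : ∀ j, 2 ≤ m j)
    (f : (∀ j, Fin (m j)) → ℝ) (hf : ∀ i, 0 ≤ f i)
    (hweak : (tensorGraph f).Connected)
    (p : Fin d → ℝ) (hp : ∀ j, (d : ℝ) ≤ p j) :
    ∃! x : ∀ j, Fin (m j) → ℝ,
      (∀ j a, 0 < x j a) ∧
      (∀ j, ∑ a, x j a ^ p j = 1) ∧
      ∃ lam : ℝ,
        ∀ (j : Fin d) (a : Fin (m j)),
          (∑ i ∈ Finset.univ.filter (fun i : ∀ l, Fin (m l) => i j = a),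
              f i * ∏ l ∈ Finset.univ.erase j, x l (i l))
            = lam * x j a ^ (p j - 1) := by
  obtain ⟨x, hxpos, hxnorm, lam, hxeig⟩ := PF_exists hd hm f hf hweak p hp
  refine ⟨x, ⟨hxpos, hxnorm, lam, hxeig⟩, ?_⟩
  rintro y ⟨hypos, hynorm, lam', hyeig⟩
  exact PF_unique hd hm f hf hweak p hp x y lam lam' hxpos hxnorm hxeig hypos hynorm hyeig
end

section
/- Let f be a nonnegative multilinear form with irreducible tensor F and p₁,…,p_d ≥ d. Then every solution (x₁,…,x_d) with each x_j ∈ S_{p_j,+}^{m_j−1} (nonnegative, unit p_j-norm) of the eigenvalue system Σ_{i_l, l≠j} f_{i₁,…,i_d} ∏_{l≠j} x_{i_l,l} = λ x_{i_j,j}^{p_j−1} is strictly positive, λ > 0, and the solution is unique. -/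
open Finset

lemma sum_term_eq {ι : Type*} (s : Finset ι) (f g : ι → ℝ)
    (hle : ∀ i ∈ s, f i ≤ g i) (hsum : ∑ i ∈ s, g i ≤ ∑ i ∈ s, f i) :
    ∀ i ∈ s, f i = g i := by
  intro i hi
  by_contra hne
  have hlt := Finset.sum_lt_sum hle ⟨i, hi, lt_of_le_of_ne (hle i hi) hne⟩
  linarith

lemma prod_term_eq {ι : Type*} (s : Finset ι) (f g : ι → ℝ)
    (hpos : ∀ i ∈ s, 0 < f i) (hle : ∀ i ∈ s, f i ≤ g i)
    (hprod : ∏ i ∈ s, g i ≤ ∏ i ∈ s, f i) :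
    ∀ i ∈ s, f i = g i := by
  intro i hi
  by_contra hne
  have hlt := Finset.prod_lt_prod hpos hle ⟨i, hi, lt_of_le_of_ne (hle i hi) hne⟩
  linarith

lemma pf_pos {d : ℕ} {m : Fin d → ℕ} (hd : 2 ≤ d) (hm : ∀ j, 2 ≤ m j)
    (f : (∀ j, Fin (m j)) → ℝ) (hf : ∀ i, 0 ≤ f i) (hirr : TensorIrreducible f)
    (p : Fin d → ℝ) (hp : ∀ j, (d : ℝ) ≤ p j)
    (x : ∀ j, Fin (m j) → ℝ) (lam : ℝ)
    (hx0 : ∀ j a, 0 ≤ x j a) (hnorm : ∀ j, ∑ a, x j a ^ p j = 1)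
    (heig : ∀ (j : Fin d) (a : Fin (m j)),
      (∑ i ∈ Finset.univ.filter (fun i : ∀ l, Fin (m l) => i j = a),
          f i * ∏ l ∈ Finset.univ.erase j, x l (i l)) = lam * x j a ^ (p j - 1)) :
    (∀ j a, 0 < x j a) ∧ 0 < lam := by
  have hp2 : ∀ j, (2:ℝ) ≤ p j := fun j => le_trans (by exact_mod_cast hd) (hp j)
  have hp1 : ∀ j, p j - 1 ≠ 0 := fun j => by have := hp2 j; intro h; linarith [sub_eq_zero.mp h]
  -- positivity of x
  have hxpos : ∀ j a, 0 < x j a := by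
    by_contra hcon
    push_neg at hcon
    obtain ⟨j₀, a₀, h0⟩ := hcon
    have hxz : x j₀ a₀ = 0 := le_antisymm h0 (hx0 j₀ a₀)
    set I : Set (Σ j : Fin d, Fin (m j)) := {s | x s.1 s.2 = 0} with hI
    have hIne : I.Nonempty := ⟨⟨j₀, a₀⟩, hxz⟩
    have hIuniv : I ≠ Set.univ := by
      have : ∃ a, x j₀ a ≠ 0 := by
        by_contra hall
        push_neg at hall
        have := hnorm j₀
        rw [Finset.sum_congr rfl (fun a _ => by
          rw [hall a, Real.zero_rpow (by have := hp2 j₀; intro h; rw [h] at this; linarith)])] at this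
        simp at this
      obtain ⟨a, ha⟩ := this
      intro h
      exact ha (by have : (⟨j₀, a⟩ : Σ j, Fin (m j)) ∈ I := h ▸ Set.mem_univ _; exact this)
    obtain ⟨k, i, hkI, hout, hfi⟩ := hirr I hIne hIuniv
    have hlhs : 0 < ∑ i' ∈ Finset.univ.filter (fun i' : ∀ l, Fin (m l) => i' k = i k),
        f i' * ∏ l ∈ Finset.univ.erase k, x l (i' l) := by
      apply Finset.sum_pos'
      · exact fun i' _ => mul_nonneg (hf i') (Finset.prod_nonneg fun l _ => hx0 l (i' l))
      · refine ⟨i, by simp, mul_pos hfi (Finset.prod_pos fun l hl => ?_)⟩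
        have hlk : l ≠ k := (Finset.mem_erase.mp hl).1
        have := hout l hlk
        exact lt_of_le_of_ne (hx0 l (i l)) (fun h => this (by exact h.symm))
    rw [heig k (i k), hkI, Real.zero_rpow (hp1 k), mul_zero] at hlhs
    exact lt_irrefl 0 hlhs
  refine ⟨hxpos, ?_⟩
  -- lam > 0 via irreducibility on a singleton
  have hd0 : 0 < d := by omega
  let j₀ : Fin d := ⟨0, hd0⟩
  let a₀ : Fin (m j₀) := ⟨0, by have := hm j₀; omega⟩
  let a₁ : Fin (m j₀) := ⟨1, by have := hm j₀; omega⟩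
  obtain ⟨k, i, _, _, hfi⟩ := hirr {⟨j₀, a₀⟩} ⟨_, rfl⟩ (by
    intro h
    have : (⟨j₀, a₁⟩ : Σ j, Fin (m j)) ∈ ({⟨j₀, a₀⟩} : Set (Σ j, Fin (m j))) :=
      h ▸ Set.mem_univ _
    rw [Set.mem_singleton_iff, Sigma.mk.inj_iff] at this
    exact absurd (eq_of_heq this.2) (by simp [a₀, a₁, Fin.ext_iff]))
  have hlhs : 0 < ∑ i' ∈ Finset.univ.filter (fun i' : ∀ l, Fin (m l) => i' k = i k),
      f i' * ∏ l ∈ Finset.univ.erase k, x l (i' l) := by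
    apply Finset.sum_pos'
    · exact fun i' _ => mul_nonneg (hf i') (Finset.prod_nonneg fun l _ => hx0 l (i' l))
    · exact ⟨i, by simp, mul_pos hfi (Finset.prod_pos fun l _ => hxpos l (i l))⟩
  rw [heig k (i k)] at hlhs
  have hxp : 0 < x k (i k) ^ (p k - 1) := Real.rpow_pos_of_pos (hxpos k (i k)) _
  nlinarith

lemma pf_le {d : ℕ} {m : Fin d → ℕ} (hd : 2 ≤ d) (hm : ∀ j, 2 ≤ m j)
    (f : (∀ j, Fin (m j)) → ℝ) (hf : ∀ i, 0 ≤ f i) (hirr : TensorIrreducible f)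
    (p : Fin d → ℝ) (hp : ∀ j, (d : ℝ) ≤ p j)
    (x x' : ∀ j, Fin (m j) → ℝ) (lam lam' : ℝ)
    (hx : ∀ j a, 0 < x j a) (hx' : ∀ j a, 0 < x' j a)
    (hlam : 0 < lam) (hlam' : 0 < lam')
    (hnorm : ∀ j, ∑ a, x j a ^ p j = 1) (hnorm' : ∀ j, ∑ a, x' j a ^ p j = 1)
    (heig : ∀ (j : Fin d) (a : Fin (m j)),
      (∑ i ∈ Finset.univ.filter (fun i : ∀ l, Fin (m l) => i j = a),
          f i * ∏ l ∈ Finset.univ.erase j, x l (i l)) = lam * x j a ^ (p j - 1))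
    (heig' : ∀ (j : Fin d) (a : Fin (m j)),
      (∑ i ∈ Finset.univ.filter (fun i : ∀ l, Fin (m l) => i j = a),
          f i * ∏ l ∈ Finset.univ.erase j, x' l (i l)) = lam' * x' j a ^ (p j - 1)) :
    lam ≤ lam' ∧ (lam = lam' → ∀ j a, x' j a = x j a) := by
  have hd0 : 0 < d := by omega
  have hp0 : ∀ j, 0 < p j := fun j => lt_of_lt_of_le (by exact_mod_cast hd0) (hp j)
  have hne : ∀ j, (Finset.univ : Finset (Fin (m j))).Nonempty :=
    fun j => ⟨⟨0, by have := hm j; omega⟩, Finset.mem_univ _⟩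
  set s : Fin d → ℝ := fun j => Finset.univ.inf' (hne j) (fun a => x' j a / x j a) with hsdef
  have hs_pos : ∀ j, 0 < s j := fun j =>
    (Finset.lt_inf'_iff _).mpr (fun a _ => div_pos (hx' j a) (hx j a))
  have hs_le : ∀ j a, s j * x j a ≤ x' j a := by
    intro j a
    have h1 : s j ≤ x' j a / x j a := Finset.inf'_le _ (Finset.mem_univ a)
    calc s j * x j a ≤ (x' j a / x j a) * x j a :=
          mul_le_mul_of_nonneg_right h1 (hx j a).le
      _ = x' j a := div_mul_cancel₀ _ (hx j a).ne'
  have hmin : ∀ j, ∃ a, x' j a = s j * x j a := by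
    intro j
    obtain ⟨a, _, ha⟩ := Finset.exists_mem_eq_inf' (hne j) (fun a => x' j a / x j a)
    refine ⟨a, ?_⟩
    have hsa : s j = x' j a / x j a := ha
    rw [hsa, div_mul_cancel₀ _ (hx j a).ne']
  have hs_le1 : ∀ j, s j ≤ 1 := by
    intro j
    by_contra h
    push_neg at h
    have hlt : ∀ a, x j a < x' j a := fun a =>
      lt_of_lt_of_le (by nlinarith [hx j a]) (hs_le j a)
    have : ∑ a, x j a ^ p j < ∑ a, x' j a ^ p j :=
      Finset.sum_lt_sum_of_nonempty (hne j)
        (fun a _ => Real.rpow_lt_rpow (hx j a).le (hlt a) (hp0 j))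
    rw [hnorm j, hnorm' j] at this
    exact lt_irrefl 1 this
  -- key inequality
  have KI : ∀ (j : Fin d) (a : Fin (m j)),
      (∏ l ∈ Finset.univ.erase j, s l) * (lam * x j a ^ (p j - 1))
        ≤ lam' * x' j a ^ (p j - 1) := by
    intro j a
    rw [← heig j a, ← heig' j a, Finset.mul_sum]
    apply Finset.sum_le_sum
    intro i _
    rw [← mul_assoc, mul_comm (∏ l ∈ Finset.univ.erase j, s l) (f i), mul_assoc]
    refine mul_le_mul_of_nonneg_left ?_ (hf i)
    rw [← Finset.prod_mul_distrib]
    exact Finset.prod_le_prod (fun l _ => mul_nonneg (hs_pos l).le (hx l (i l)).le)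
      (fun l _ => hs_le l (i l))
  have KImin : ∀ j, (∏ l ∈ Finset.univ.erase j, s l) * lam ≤ lam' * s j ^ (p j - 1) := by
    intro j
    obtain ⟨a, ha⟩ := hmin j
    have h := KI j a
    rw [ha, Real.mul_rpow (hs_pos j).le (hx j a).le] at h
    have hc : 0 < x j a ^ (p j - 1) := Real.rpow_pos_of_pos (hx j a) _
    have h2 : ((∏ l ∈ Finset.univ.erase j, s l) * lam) * x j a ^ (p j - 1)
        ≤ (lam' * s j ^ (p j - 1)) * x j a ^ (p j - 1) := by linarith [h, mul_assoc (∏ l ∈ Finset.univ.erase j, s l) lam (x j a ^ (p j - 1))]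
    exact le_of_mul_le_mul_right (by linarith [h2]) hc
  set P : ℝ := ∏ l, s l with hPdef
  have hPpos : 0 < P := Finset.prod_pos fun l _ => hs_pos l
  have hEr : ∀ j, ∏ l ∈ Finset.univ.erase j, s l = P / s j := by
    intro j
    rw [eq_div_iff (hs_pos j).ne']
    exact Finset.prod_erase_mul _ _ (Finset.mem_univ j)
  have hprod_er : ∏ j, ∏ l ∈ Finset.univ.erase j, s l = P ^ (d - 1) := by
    rw [Finset.prod_congr rfl (fun j _ => hEr j), Finset.prod_div_distrib,
      Finset.prod_const, Finset.card_univ, Fintype.card_fin, ← hPdef,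
      pow_sub₀ P hPpos.ne' (by omega : 1 ≤ d), pow_one, div_eq_mul_inv]
  set Q : ℝ := ∏ j, s j ^ (p j - 1) with hQdef
  have hQpos : 0 < Q := Finset.prod_pos fun j _ => Real.rpow_pos_of_pos (hs_pos j) _
  have hQle : Q ≤ P ^ (d - 1) := by
    have h1 : Q ≤ ∏ j, s j ^ ((d : ℝ) - 1) := by
      refine Finset.prod_le_prod (fun j _ => (Real.rpow_pos_of_pos (hs_pos j) _).le) ?_
      exact fun j _ => Real.rpow_le_rpow_of_exponent_ge (hs_pos j) (hs_le1 j)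
        (sub_le_sub_right (hp j) 1)
    have h2 : ∏ j, s j ^ ((d : ℝ) - 1) = P ^ (d - 1) := by
      rw [Finset.prod_congr rfl (fun j _ => ?_), ← Finset.prod_pow]
      rw [← Real.rpow_natCast (s j) (d - 1)]
      congr 1
      push_cast [Nat.cast_sub (by omega : 1 ≤ d)]
      ring
    linarith
  have hA : ∏ j, ((∏ l ∈ Finset.univ.erase j, s l) * lam) ≤ ∏ j, (lam' * s j ^ (p j - 1)) :=
    Finset.prod_le_prod
      (fun j _ => mul_nonneg (Finset.prod_nonneg fun l _ => (hs_pos l).le) hlam.le)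
      (fun j _ => KImin j)
  have hAl : ∏ j, ((∏ l ∈ Finset.univ.erase j, s l) * lam) = P ^ (d - 1) * lam ^ d := by
    rw [Finset.prod_mul_distrib, hprod_er, Finset.prod_const, Finset.card_univ,
      Fintype.card_fin]
  have hAr : ∏ j, (lam' * s j ^ (p j - 1)) = lam' ^ d * Q := by
    rw [Finset.prod_mul_distrib, Finset.prod_const, Finset.card_univ, Fintype.card_fin, hQdef]
  have hlamled : lam ^ d * Q ≤ lam' ^ d * Q := by
    have h1 : lam ^ d * Q ≤ lam ^ d * P ^ (d - 1) :=
      mul_le_mul_of_nonneg_left hQle (pow_nonneg hlam.le d)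
    have h2 : P ^ (d - 1) * lam ^ d ≤ lam' ^ d * Q := by rw [← hAl, ← hAr]; exact hA
    linarith [h1, h2, mul_comm (lam ^ d) (P ^ (d - 1))]
  have hle : lam ≤ lam' :=
    le_of_pow_le_pow_left₀ (by omega) hlam'.le (le_of_mul_le_mul_right hlamled hQpos)
  refine ⟨hle, ?_⟩
  intro heq
  -- equality phase
  have hEj : ∀ j, ∏ l ∈ Finset.univ.erase j, s l = s j ^ (p j - 1) := by
    have hfac := prod_term_eq Finset.univ
      (fun j => (∏ l ∈ Finset.univ.erase j, s l) * lam)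
      (fun j => lam' * s j ^ (p j - 1))
      (fun j _ => mul_pos (Finset.prod_pos fun l _ => hs_pos l) hlam)
      (fun j _ => KImin j)
      (by
        rw [hAl, hAr, ← heq]
        have := mul_le_mul_of_nonneg_left hQle (pow_nonneg hlam.le d)
        linarith [mul_comm (lam ^ d) (P ^ (d - 1))])
    intro j
    have h := hfac j (Finset.mem_univ j)
    rw [← heq] at h
    have := mul_right_cancel₀ hlam.ne' (by linarith [h, mul_comm lam (s j ^ (p j - 1))] :
      (∏ l ∈ Finset.univ.erase j, s l) * lam = s j ^ (p j - 1) * lam)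
    exact this
  -- the set of coordinates where the min ratio is attained
  set Z : Set (Σ j : Fin d, Fin (m j)) := {σ | x' σ.1 σ.2 = s σ.1 * x σ.1 σ.2} with hZdef
  have hZne : Z.Nonempty := by
    obtain ⟨a, ha⟩ := hmin ⟨0, hd0⟩
    exact ⟨⟨⟨0, hd0⟩, a⟩, ha⟩
  have hZuniv : Z = Set.univ := by
    by_contra hZn
    obtain ⟨k, i, hkZ, hout, hfi⟩ := hirr Z hZne hZn
    -- equality of the two sums at (k, i k)
    have hsums : ∑ i' ∈ Finset.univ.filter (fun i' : ∀ l, Fin (m l) => i' k = i k),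
          f i' * ∏ l ∈ Finset.univ.erase k, x' l (i' l)
        = ∑ i' ∈ Finset.univ.filter (fun i' : ∀ l, Fin (m l) => i' k = i k),
          f i' * ∏ l ∈ Finset.univ.erase k, (s l * x l (i' l)) := by
      have hkZ' : x' k (i k) = s k * x k (i k) := hkZ
      rw [heig' k (i k), ← heq, hkZ', Real.mul_rpow (hs_pos k).le (hx k (i k)).le]
      rw [show lam * (s k ^ (p k - 1) * x k (i k) ^ (p k - 1))
          = s k ^ (p k - 1) * (lam * x k (i k) ^ (p k - 1)) from by ring]
      rw [← heig k (i k), ← hEj k, Finset.mul_sum]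
      refine Finset.sum_congr rfl fun i' _ => ?_
      rw [Finset.prod_mul_distrib, ← mul_assoc, mul_comm (∏ l ∈ Finset.univ.erase k, s l) (f i'), mul_assoc]
    -- termwise equality
    have hterm := sum_term_eq
      (Finset.univ.filter (fun i' : ∀ l, Fin (m l) => i' k = i k))
      (fun i' => f i' * ∏ l ∈ Finset.univ.erase k, (s l * x l (i' l)))
      (fun i' => f i' * ∏ l ∈ Finset.univ.erase k, x' l (i' l))
      (fun i' _ => by
        refine mul_le_mul_of_nonneg_left ?_ (hf i')
        exact Finset.prod_le_prod (fun l _ => mul_nonneg (hs_pos l).le (hx l (i' l)).le)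
          (fun l _ => hs_le l (i' l)))
      (le_of_eq hsums)
      i (by simp)
    have hprods : ∏ l ∈ Finset.univ.erase k, (s l * x l (i l))
        = ∏ l ∈ Finset.univ.erase k, x' l (i l) :=
      mul_left_cancel₀ hfi.ne' hterm
    have hfac := prod_term_eq (Finset.univ.erase k)
      (fun l => s l * x l (i l)) (fun l => x' l (i l))
      (fun l _ => mul_pos (hs_pos l) (hx l (i l)))
      (fun l _ => hs_le l (i l))
      (le_of_eq hprods.symm)
    -- pick some j ≠ k
    have hexj : ∃ j : Fin d, j ≠ k := by
      by_contra hall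
      push_neg at hall
      have h0 := hall ⟨0, hd0⟩
      have h1 := hall ⟨1, by omega⟩
      rw [← h1] at h0
      simp [Fin.ext_iff] at h0
    obtain ⟨j, hj⟩ := hexj
    have hjm : j ∈ Finset.univ.erase k := Finset.mem_erase.mpr ⟨hj, Finset.mem_univ j⟩
    exact hout j hj ((hfac j hjm).symm)
  have hxx : ∀ j a, x' j a = s j * x j a := by
    intro j a
    have : (⟨j, a⟩ : Σ j, Fin (m j)) ∈ Z := hZuniv.symm ▸ Set.mem_univ _
    exact this
  have hs1 : ∀ j, s j = 1 := by
    intro j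
    have h1 : s j ^ p j = 1 := by
      have := hnorm' j
      rw [Finset.sum_congr rfl (fun a _ => by
        rw [hxx j a, Real.mul_rpow (hs_pos j).le (hx j a).le])] at this
      rw [← Finset.mul_sum, hnorm j, mul_one] at this
      exact this
    rcases lt_trichotomy (s j) 1 with h | h | h
    · have := Real.rpow_lt_one (hs_pos j).le h (hp0 j)
      rw [h1] at this; exact absurd this (lt_irrefl 1)
    · exact h
    · have := Real.one_lt_rpow h (hp0 j)
      rw [h1] at this; exact absurd this (lt_irrefl 1)
  intro j a
  rw [hxx j a, hs1 j, one_mul]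

/-- Perron–Frobenius theorem for nonnegative multilinear forms (irreducible case):
if the tensor `f` is nonnegative and irreducible and `p_j ≥ d` for all `j`, then every
solution of the eigenvalue system with each `x_j` nonnegative of unit `p_j`-norm is
strictly positive with `λ > 0`, and the solution is unique. -/
theorem multilinear_PF_irreducible (d : ℕ) (hd : 2 ≤ d)
    (m : Fin d → ℕ) (hm : ∀ j, 2 ≤ m j)
    (f : (∀ j, Fin (m j)) → ℝ) (hf : ∀ i, 0 ≤ f i)
    (hirr : TensorIrreducible f)
    (p : Fin d → ℝ) (hp : ∀ j, (d : ℝ) ≤ p j) :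
    (∀ (x : ∀ j, Fin (m j) → ℝ) (lam : ℝ),
        (∀ j a, 0 ≤ x j a) →
        (∀ j, ∑ a, x j a ^ p j = 1) →
        (∀ (j : Fin d) (a : Fin (m j)),
          (∑ i ∈ Finset.univ.filter (fun i : ∀ l, Fin (m l) => i j = a),
              f i * ∏ l ∈ Finset.univ.erase j, x l (i l))
            = lam * x j a ^ (p j - 1)) →
        (∀ j a, 0 < x j a) ∧ 0 < lam) ∧
    (∀ (x x' : ∀ j, Fin (m j) → ℝ) (lam lam' : ℝ),
        (∀ j a, 0 ≤ x j a) → (∀ j a, 0 ≤ x' j a) →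
        (∀ j, ∑ a, x j a ^ p j = 1) → (∀ j, ∑ a, x' j a ^ p j = 1) →
        (∀ (j : Fin d) (a : Fin (m j)),
          (∑ i ∈ Finset.univ.filter (fun i : ∀ l, Fin (m l) => i j = a),
              f i * ∏ l ∈ Finset.univ.erase j, x l (i l))
            = lam * x j a ^ (p j - 1)) →
        (∀ (j : Fin d) (a : Fin (m j)),
          (∑ i ∈ Finset.univ.filter (fun i : ∀ l, Fin (m l) => i j = a),
              f i * ∏ l ∈ Finset.univ.erase j, x' l (i l))
            = lam' * x' j a ^ (p j - 1)) →
        x = x' ∧ lam = lam') := by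
  constructor
  · intro x lam hx0 hnorm heig
    exact pf_pos hd hm f hf hirr p hp x lam hx0 hnorm heig
  · intro x x' lam lam' hx0 hx0' hnorm hnorm' heig heig'
    obtain ⟨hxp, hlamp⟩ := pf_pos hd hm f hf hirr p hp x lam hx0 hnorm heig
    obtain ⟨hxp', hlamp'⟩ := pf_pos hd hm f hf hirr p hp x' lam' hx0' hnorm' heig'
    obtain ⟨h1, h1e⟩ := pf_le hd hm f hf hirr p hp x x' lam lam' hxp hxp' hlamp hlamp'
      hnorm hnorm' heig heig'
    obtain ⟨h2, -⟩ := pf_le hd hm f hf hirr p hp x' x lam' lam hxp' hxp hlamp' hlamp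
      hnorm' hnorm heig' heig
    have hleq : lam = lam' := le_antisymm h1 h2
    exact ⟨funext fun j => funext fun a => (h1e hleq j a).symm, hleq⟩
end

section
/- Let F : ℝ_{>0}^n → ℝ_{>0}^n be homogeneous of degree one and monotone, with a positive eigenvector u (F(u) = λu, u > 0). Suppose F is C¹ near u and the Jacobian matrix DF(u) is irreducible (as a nonnegative matrix). Then u is the unique positive eigenvector of F up to positive scalar multiples. -/
/-- A nonnegative square matrix is irreducible if there is no nonempty proper subset
of indices `I` with `A i j = 0` for all `i ∈ I`, `j ∉ I` (equivalently, its digraph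
is strongly connected). -/
def MatIrreducible {n : ℕ} (A : Matrix (Fin n) (Fin n) ℝ) : Prop :=
  ∀ I : Set (Fin n), I.Nonempty → I ≠ Set.univ → ∃ i ∈ I, ∃ j ∉ I, 0 < A i j

/-- Nussbaum's uniqueness theorem: if a homogeneous monotone self-map `F` of the open
positive cone has a positive eigenvector `u`, is `C¹` near `u`, and the Jacobian
`DF(u)` is an irreducible nonnegative matrix, then `u` is the unique positive
eigenvector of `F` up to positive scalar multiples. -/
theorem unique_eigenvector_of_irreducible_jacobian (n : ℕ) (hn : 0 < n)
    (F : (Fin n → ℝ) → (Fin n → ℝ))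
    (hFpos : ∀ x, (∀ i, 0 < x i) → ∀ i, 0 < F x i)
    (hhom : ∀ t : ℝ, 0 < t → ∀ x, (∀ i, 0 < x i) → F (t • x) = t • F x)
    (hmono : ∀ x y, (∀ i, 0 < x i) → (∀ i, 0 < y i) → x ≤ y → F x ≤ F y)
    (u : Fin n → ℝ) (hu : ∀ i, 0 < u i) (lam : ℝ) (hlam : 0 < lam)
    (heig : F u = lam • u)
    (hC1 : ContDiffAt ℝ 1 F u)
    (A : Matrix (Fin n) (Fin n) ℝ)
    (hA : HasFDerivAt F (Matrix.mulVecLin A).toContinuousLinearMap u)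
    (hAnonneg : ∀ i j, 0 ≤ A i j)
    (hAirr : MatIrreducible A) :
    ∀ (v : Fin n → ℝ) (μ : ℝ), (∀ i, 0 < v i) → F v = μ • v →
      ∃ t : ℝ, 0 < t ∧ v = t • u := by
  intro v μ hv heigv
  haveI : Nonempty (Fin n) := ⟨⟨0, hn⟩⟩
  -- minimal ratio
  obtain ⟨i₀, -, hi₀⟩ := Finset.exists_min_image Finset.univ (fun i => v i / u i)
    ⟨⟨0, hn⟩, Finset.mem_univ _⟩
  obtain ⟨j₀, -, hj₀⟩ := Finset.exists_max_image Finset.univ (fun i => v i / u i)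
    ⟨⟨0, hn⟩, Finset.mem_univ _⟩
  set t : ℝ := v i₀ / u i₀ with ht
  set T : ℝ := v j₀ / u j₀ with hT
  have htpos : 0 < t := div_pos (hv i₀) (hu i₀)
  have hTpos : 0 < T := div_pos (hv j₀) (hu j₀)
  have htle : ∀ i, t * u i ≤ v i := fun i => by
    have := hi₀ i (Finset.mem_univ i)
    calc t * u i ≤ (v i / u i) * u i := by nlinarith [(hu i)]
    _ = v i := div_mul_cancel₀ _ (hu i).ne'
  have hTle : ∀ i, v i ≤ T * u i := fun i => by
    have := hj₀ i (Finset.mem_univ i)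
    calc v i = (v i / u i) * u i := (div_mul_cancel₀ _ (hu i).ne').symm
    _ ≤ T * u i := by nlinarith [(hu i)]
  have hti₀ : v i₀ = t * u i₀ := (div_mul_cancel₀ _ (hu i₀).ne').symm
  have hTj₀ : v j₀ = T * u j₀ := (div_mul_cancel₀ _ (hu j₀).ne').symm
  have htupos : ∀ i, 0 < (t • u) i := fun i => mul_pos htpos (hu i)
  have hTupos : ∀ i, 0 < (T • u) i := fun i => mul_pos hTpos (hu i)
  have hFtu : F (t • u) = (t * lam) • u := by
    rw [hhom t htpos u hu, heig, smul_smul]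
  have hFTu : F (T • u) = (T * lam) • u := by
    rw [hhom T hTpos u hu, heig, smul_smul]
  -- μ = lam
  have h1 : F (t • u) ≤ F v := hmono _ _ htupos hv (fun i => htle i)
  have h2 : F v ≤ F (T • u) := hmono _ _ hv hTupos (fun i => hTle i)
  have hlamle : lam ≤ μ := by
    have := h1 i₀
    rw [hFtu, heigv] at this
    simp only [Pi.smul_apply, smul_eq_mul] at this
    rw [hti₀] at this
    nlinarith [mul_pos htpos (hu i₀)]
  have hmule : μ ≤ lam := by
    have := h2 j₀
    rw [hFTu, heigv] at this
    simp only [Pi.smul_apply, smul_eq_mul] at this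
    rw [hTj₀] at this
    nlinarith [mul_pos hTpos (hu j₀)]
  have hmueq : μ = lam := le_antisymm hmule hlamle
  subst hmueq
  -- equality set
  refine ⟨t, htpos, ?_⟩
  by_contra hne
  set I : Set (Fin n) := {i | v i = t * u i} with hI
  have hInon : I.Nonempty := ⟨i₀, hti₀⟩
  have hIne : I ≠ Set.univ := by
    intro h
    apply hne
    funext i
    have : i ∈ I := h ▸ Set.mem_univ i
    simpa [hI, Pi.smul_apply, smul_eq_mul] using this
  obtain ⟨i, hiI, j, hjI, hAij⟩ := hAirr I hInon hIne
  set w : Fin n → ℝ := v - t • u with hw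
  have hwnonneg : ∀ k, 0 ≤ w k := fun k => sub_nonneg.2 (htle k)
  have hwj : 0 < w j := by
    have : v j ≠ t * u j := hjI
    have := lt_of_le_of_ne (htle j) (Ne.symm this)
    simpa [hw, Pi.smul_apply, smul_eq_mul] using sub_pos.2 this
  have hwi : w i = 0 := by
    have : v i = t * u i := hiI
    simp [hw, this, Pi.smul_apply, smul_eq_mul]
  -- derivative of F at t • u is A
  set L := (Matrix.mulVecLin A).toContinuousLinearMap with hL
  have hPopen : IsOpen {x : Fin n → ℝ | ∀ k, 0 < x k} := by
    have : {x : Fin n → ℝ | ∀ k, 0 < x k} = ⋂ k, (fun x : Fin n → ℝ => x k) ⁻¹' Set.Ioi 0 := by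
      ext x; simp [Set.mem_iInter]
    rw [this]
    exact isOpen_iInter_of_finite fun k => (continuous_apply k).isOpen_preimage _ isOpen_Ioi
  have hA' : HasFDerivAt F L (t • u) := by
    have hcomp : HasFDerivAt (fun x : Fin n → ℝ => t • F (t⁻¹ • x)) L (t • u) := by
      have hsmul : HasFDerivAt (fun x : Fin n → ℝ => t⁻¹ • x)
          (t⁻¹ • ContinuousLinearMap.id ℝ (Fin n → ℝ)) (t • u) :=
        (ContinuousLinearMap.id ℝ (Fin n → ℝ)).hasFDerivAt.const_smul t⁻¹
      have hFat : HasFDerivAt F L (t⁻¹ • t • u) := by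
        rw [smul_smul, inv_mul_cancel₀ htpos.ne', one_smul]; exact hA
      have := (hFat.comp (t • u) hsmul).const_smul t
      convert this using 1 <;> ext x <;>
      simp [ContinuousLinearMap.smul_comp, smul_smul, mul_inv_cancel₀ htpos.ne']
    refine hcomp.congr_of_eventuallyEq ?_
    exact Filter.eventuallyEq_of_mem (hPopen.mem_nhds htupos) fun x hx => by
      have hx' : ∀ k, 0 < (t⁻¹ • x) k := fun k =>
        mul_pos (inv_pos.2 htpos) (hx k)
      have := hhom t htpos (t⁻¹ • x) hx'
      rw [smul_smul, mul_inv_cancel₀ htpos.ne', one_smul] at this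
      rw [this]
  -- curve
  have hγ : HasDerivAt (fun s : ℝ => t • u + s • w) w 0 := by
    have h1 : HasDerivAt (fun s : ℝ => s • w) ((1:ℝ) • w) 0 :=
      (hasDerivAt_id (0:ℝ)).smul_const w
    simpa using h1.const_add (t • u)
  have hγ0 : (fun s : ℝ => t • u + s • w) 0 = t • u := by simp
  have hg : HasDerivAt (fun s : ℝ => F (t • u + s • w) i) ((A.mulVec w) i) 0 := by
    have hcomp : HasDerivAt (fun s : ℝ => F (t • u + s • w)) (L w) 0 := by
      have hA'' : HasFDerivAt F L ((fun s : ℝ => t • u + s • w) 0) := by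
        simpa using hA'
      have := hA''.comp_hasDerivAt 0 hγ
      exact this
    have := (ContinuousLinearMap.proj (R := ℝ) (φ := fun _ : Fin n => ℝ) i).hasFDerivAt.comp_hasDerivAt 0 hcomp
    simp [hL] at this
    exact this
  -- g is constant on [0,1]
  have hconst : ∀ s ∈ Set.Ioc (0:ℝ) 1, F (t • u + s • w) i = F (t • u) i := by
    intro s hs
    have hpos : ∀ k, 0 < (t • u + s • w) k := fun k => by
      have : 0 ≤ s * w k := mul_nonneg hs.1.le (hwnonneg k)
      have := htupos k
      simp only [Pi.add_apply, Pi.smul_apply, smul_eq_mul] at *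
      linarith
    have hle1 : t • u ≤ t • u + s • w := fun k => by
      have : 0 ≤ s * w k := mul_nonneg hs.1.le (hwnonneg k)
      simp only [Pi.add_apply, Pi.smul_apply, smul_eq_mul]
      linarith
    have hle2 : t • u + s • w ≤ v := fun k => by
      have h1 : s * w k ≤ w k := by
        nlinarith [hwnonneg k, hs.2]
      have h2 : t * u k + w k = v k := by simp [hw]
      simp only [Pi.add_apply, Pi.smul_apply, smul_eq_mul]
      linarith
    have hl := hmono _ _ htupos hpos hle1 i
    have hr := hmono _ _ hpos hv hle2 i
    have hFv : F v i = F (t • u) i := by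
      rw [heigv, hFtu]
      simp only [Pi.smul_apply, smul_eq_mul]
      rw [show v i = t * u i from hiI]
      ring
    linarith [hFv ▸ hr]
  -- derivative is zero
  have hslope : Filter.Tendsto (slope (fun s : ℝ => F (t • u + s • w) i) 0)
      (nhdsWithin 0 (Set.Ioi 0)) (nhds ((A.mulVec w) i)) := by
    have := hasDerivAt_iff_tendsto_slope.1 hg
    exact this.mono_left (nhdsWithin_mono 0 (fun s hs => ne_of_gt hs))
  have hzero : (A.mulVec w) i = 0 := by
    have hev : ∀ᶠ s in nhdsWithin (0:ℝ) (Set.Ioi 0),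
        slope (fun s : ℝ => F (t • u + s • w) i) 0 s = 0 := by
      filter_upwards [Ioc_mem_nhdsGT_of_mem (by norm_num : (0:ℝ) ∈ Set.Ico 0 1)] with s hs
      rw [slope_def_field]
      simp only [zero_smul, add_zero, sub_zero]
      rw [hconst s hs, sub_self, zero_div]
    have : Filter.Tendsto (slope (fun s : ℝ => F (t • u + s • w) i) 0)
        (nhdsWithin 0 (Set.Ioi 0)) (nhds 0) :=
      Filter.Tendsto.congr' (by filter_upwards [hev] with s hs; exact hs.symm) tendsto_const_nhds
    exact tendsto_nhds_unique hslope this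
  -- but it's positive
  have hpos : 0 < (A.mulVec w) i := by
    have : (A.mulVec w) i = ∑ k, A i k * w k := rfl
    rw [this]
    apply Finset.sum_pos' (fun k _ => mul_nonneg (hAnonneg i k) (hwnonneg k))
    exact ⟨j, Finset.mem_univ j, mul_pos hAij hwj⟩
  linarith
end

section
/- Let P : ℝ^n → ℝ^n be a polynomial map where each P_i is homogeneous of degree d ≥ 1 with nonnegative coefficients, and assume P is weakly irreducible. Then the unique λ such that P_i(u) = λ u_i^d for some positive vector u satisfies the Collatz–Wielandt formula: λ = inf_{x > 0} max_{i∈[n]} P_i(x)/x_i^d = sup_{x ≥ 0, x ≠ 0} min_{i : x_i ≠ 0} P_i(x)/x_i^d. -/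
open MvPolynomial

private lemma cw_eval_mono {n : ℕ} (p : MvPolynomial (Fin n) ℝ)
    (hc : ∀ c, 0 ≤ coeff c p) {x y : Fin n → ℝ}
    (hy : ∀ i, 0 ≤ y i) (hxy : ∀ i, y i ≤ x i) :
    eval y p ≤ eval x p := by
  rw [eval_eq, eval_eq]
  apply Finset.sum_le_sum
  intro c _
  apply mul_le_mul_of_nonneg_left _ (hc c)
  apply Finset.prod_le_prod
  · intro i _; exact pow_nonneg (hy i) _
  · intro i _; exact pow_le_pow_left₀ (hy i) (hxy i) _

private lemma cw_eval_smul {n d : ℕ} (p : MvPolynomial (Fin n) ℝ)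
    (hp : p.IsHomogeneous d) (t : ℝ) (x : Fin n → ℝ) :
    eval (fun i => t * x i) p = t ^ d * eval x p := by
  rw [eval_eq, eval_eq, Finset.mul_sum]
  apply Finset.sum_congr rfl
  intro c hc
  have hdeg : ∑ i ∈ c.support, c i = d := by
    have h1 : c.degree = d := by
      rw [Finsupp.degree_eq_weight_one]
      exact hp (mem_support_iff.mp hc)
    simpa [Finsupp.degree_apply] using h1
  have : (∏ i ∈ c.support, (t * x i) ^ c i)
      = t ^ d * ∏ i ∈ c.support, x i ^ c i := by
    simp_rw [mul_pow]
    rw [Finset.prod_mul_distrib, Finset.prod_pow_eq_pow_sum, hdeg]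
  rw [this]; ring

/-- Collatz–Wielandt formula for a weakly irreducible polynomial map whose
components are homogeneous of degree `d` with nonnegative coefficients: the
unique eigenvalue `λ` with a positive eigenvector satisfies
`λ = inf_{x > 0} max_i P_i(x)/x_i^d = sup_{x ≥ 0, x ≠ 0} min_{i : x_i ≠ 0} P_i(x)/x_i^d`. -/
theorem collatz_wielandt_for_polynomial_maps (n : ℕ) (hn : 0 < n) (d : ℕ) (hd : 1 ≤ d)
    (P : Fin n → MvPolynomial (Fin n) ℝ)
    (hcoeff : ∀ i (c : Fin n →₀ ℕ), 0 ≤ coeff c (P i))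
    (hhom : ∀ i, (P i).IsHomogeneous d)
    (hweak : ∀ i j : Fin n, Relation.ReflTransGen
      (fun i j => ∃ c : Fin n →₀ ℕ, coeff c (P i) ≠ 0 ∧ c j ≠ 0) i j)
    (u : Fin n → ℝ) (hu : ∀ i, 0 < u i) (lam : ℝ)
    (heig : ∀ i, eval u (P i) = lam * u i ^ d) :
    (lam = ⨅ x : {x : Fin n → ℝ // ∀ i, 0 < x i}, ⨆ i : Fin n,
            eval x.1 (P i) / (x.1 i) ^ d) ∧
    (lam = ⨆ x : {x : Fin n → ℝ // (∀ i, 0 ≤ x i) ∧ x ≠ 0},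
            ⨅ i : {i : Fin n // x.1 i ≠ 0}, eval x.1 (P i.1) / (x.1 i.1) ^ d) := by
  have i0' : Fin n := ⟨0, hn⟩
  have npos : Nonempty (Fin n) := ⟨i0'⟩
  -- key lemma 1 : λ ≤ sup value for positive x
  have key1 : ∀ x : {x : Fin n → ℝ // ∀ i, 0 < x i},
      lam ≤ ⨆ i, eval x.1 (P i) / (x.1 i) ^ d := by
    rintro ⟨x, hx⟩
    show lam ≤ ⨆ i, eval x (P i) / (x i) ^ d
    obtain ⟨i0, -, hi0⟩ := Finset.exists_min_image Finset.univ
      (fun i => x i / u i) ⟨i0', Finset.mem_univ _⟩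
    set t := x i0 / u i0 with ht
    have ht0 : 0 < t := div_pos (hx i0) (hu i0)
    have hxi0 : x i0 = t * u i0 := by
      rw [ht, div_mul_cancel₀ _ (hu i0).ne']
    have hle : ∀ j, t * u j ≤ x j := by
      intro j
      have h := hi0 j (Finset.mem_univ j)
      calc t * u j ≤ (x j / u j) * u j :=
            mul_le_mul_of_nonneg_right h (hu j).le
        _ = x j := div_mul_cancel₀ _ (hu j).ne'
    have hPx : lam * x i0 ^ d ≤ eval x (P i0) := by
      have h1 : eval (fun j => t * u j) (P i0) ≤ eval x (P i0) :=
        cw_eval_mono _ (hcoeff i0) (fun j => (mul_pos ht0 (hu j)).le) hle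
      have h2 : eval (fun j => t * u j) (P i0) = t ^ d * (lam * u i0 ^ d) := by
        rw [cw_eval_smul _ (hhom i0), heig]
      have h3 : lam * x i0 ^ d = t ^ d * (lam * u i0 ^ d) := by
        rw [hxi0, mul_pow]; ring
      rw [h3, ← h2]; exact h1
    have hmain : lam ≤ eval x (P i0) / (x i0) ^ d := by
      rw [le_div_iff₀ (pow_pos (hx i0) d)]
      exact hPx
    exact hmain.trans (le_ciSup (f := fun i => eval x (P i) / (x i) ^ d)
      (Set.Finite.bddAbove (Set.finite_range _)) i0)
  -- key lemma 2 : inf value ≤ λ for nonneg nonzero x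
  have key2 : ∀ x : {x : Fin n → ℝ // (∀ i, 0 ≤ x i) ∧ x ≠ 0},
      (⨅ i : {i : Fin n // x.1 i ≠ 0}, eval x.1 (P i.1) / (x.1 i.1) ^ d) ≤ lam := by
    rintro ⟨x, hx0, hxne⟩
    show (⨅ i : {i : Fin n // x i ≠ 0}, eval x (P i.1) / (x i.1) ^ d) ≤ lam
    obtain ⟨j, hj⟩ : ∃ j, x j ≠ 0 := by
      by_contra h; push_neg at h; exact hxne (funext h)
    obtain ⟨i0, -, hi0⟩ := Finset.exists_max_image Finset.univ
      (fun i => x i / u i) ⟨i0', Finset.mem_univ _⟩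
    set s := x i0 / u i0 with hs
    have hspos : 0 < s :=
      lt_of_lt_of_le (div_pos ((hx0 j).lt_of_ne (Ne.symm hj)) (hu j))
        (hi0 j (Finset.mem_univ j))
    have hxi0 : x i0 = s * u i0 := by
      rw [hs, div_mul_cancel₀ _ (hu i0).ne']
    have hi0ne : x i0 ≠ 0 := by
      rw [hxi0]; exact (mul_pos hspos (hu i0)).ne'
    have hle : ∀ k, x k ≤ s * u k := by
      intro k
      have h := hi0 k (Finset.mem_univ k)
      calc x k = (x k / u k) * u k := (div_mul_cancel₀ _ (hu k).ne').symm
        _ ≤ s * u k := mul_le_mul_of_nonneg_right h (hu k).le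
    have hPx : eval x (P i0) ≤ lam * x i0 ^ d := by
      have h1 : eval x (P i0) ≤ eval (fun k => s * u k) (P i0) :=
        cw_eval_mono _ (hcoeff i0) hx0 hle
      have h2 : eval (fun k => s * u k) (P i0) = s ^ d * (lam * u i0 ^ d) := by
        rw [cw_eval_smul _ (hhom i0), heig]
      have h3 : lam * x i0 ^ d = s ^ d * (lam * u i0 ^ d) := by
        rw [hxi0, mul_pow]; ring
      rw [h3, ← h2]; exact h1
    have hxpos : 0 < x i0 := (hx0 i0).lt_of_ne (Ne.symm hi0ne)
    have hmain : eval x (P i0) / (x i0) ^ d ≤ lam := by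
      rw [div_le_iff₀ (pow_pos hxpos d)]
      exact hPx
    exact le_trans (ciInf_le (f := fun i : {i : Fin n // x i ≠ 0} => eval x (P i.1) / (x i.1) ^ d)
      (Set.Finite.bddBelow (Set.finite_range _)) ⟨i0, hi0ne⟩) hmain
  have hvalu : ∀ i, eval u (P i) / (u i) ^ d = lam := by
    intro i
    rw [heig i, mul_div_assoc, div_self (pow_pos (hu i) d).ne', mul_one]
  have inst1 : Nonempty {x : Fin n → ℝ // ∀ i, 0 < x i} := ⟨⟨u, hu⟩⟩
  have inst2 : Nonempty {x : Fin n → ℝ // (∀ i, 0 ≤ x i) ∧ x ≠ 0} :=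
    ⟨⟨u, fun i => (hu i).le, fun h => (hu i0').ne' (congrFun h i0')⟩⟩
  constructor
  · -- infimum formula
    refine le_antisymm (le_ciInf key1) ?_
    have bdd : BddBelow (Set.range fun x : {x : Fin n → ℝ // ∀ i, 0 < x i} =>
        ⨆ i, eval x.1 (P i) / (x.1 i) ^ d) := by
      refine ⟨lam, ?_⟩
      rintro y ⟨x, rfl⟩
      exact key1 x
    calc (⨅ x : {x : Fin n → ℝ // ∀ i, 0 < x i}, ⨆ i, eval x.1 (P i) / (x.1 i) ^ d)
        ≤ ⨆ i, eval u (P i) / (u i) ^ d := ciInf_le bdd ⟨u, hu⟩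
      _ = lam := by simp only [hvalu]; exact ciSup_const
  · -- supremum formula
    have hune : u ≠ 0 := fun h => (hu i0').ne' (congrFun h i0')
    have hu' : (∀ i, 0 ≤ u i) ∧ u ≠ 0 := ⟨fun i => (hu i).le, hune⟩
    refine le_antisymm ?_ ?_
    · have bdd : BddAbove (Set.range fun x : {x : Fin n → ℝ // (∀ i, 0 ≤ x i) ∧ x ≠ 0} =>
          ⨅ i : {i : Fin n // x.1 i ≠ 0}, eval x.1 (P i.1) / (x.1 i.1) ^ d) := by
        refine ⟨lam, ?_⟩
        rintro y ⟨x, rfl⟩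
        exact key2 x
      have hne : Nonempty {i : Fin n // u i ≠ 0} := ⟨⟨i0', (hu i0').ne'⟩⟩
      have : (⨅ i : {i : Fin n // u i ≠ 0}, eval u (P i.1) / (u i.1) ^ d) = lam := by
        simp only [hvalu]; exact ciInf_const
      calc lam = ⨅ i : {i : Fin n // u i ≠ 0}, eval u (P i.1) / (u i.1) ^ d := this.symm
        _ ≤ _ := le_ciSup bdd (⟨u, hu'⟩ : {x : Fin n → ℝ // (∀ i, 0 ≤ x i) ∧ x ≠ 0})
    · exact ciSup_le key2
end

section
/- Let P : ℝ^n → ℝ^n be a polynomial map with each P_i homogeneous of degree d with nonnegative coefficients, weakly irreducible, and let λ > 0 and u > 0 satisfy P_i(u) = λ u_i^d for all i. If ν ∈ ℂ and v ∈ ℂ^n \ {0} satisfy P_i(v) = ν v_i^d for all i ∈ [n], then |ν| ≤ λ. -/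
open MvPolynomial

namespace AuxPerron

variable {n : ℕ}

lemma abs_aeval_le (p : MvPolynomial (Fin n) ℝ)
    (hc : ∀ c : Fin n →₀ ℕ, 0 ≤ coeff c p) (v : Fin n → ℂ) :
    ‖aeval v p‖ ≤ eval (fun j => ‖v j‖) p := by
  rw [aeval_def, eval₂_eq, eval_eq]
  refine le_trans (norm_sum_le _ _) (le_of_eq ?_)
  refine Finset.sum_congr rfl fun c _ => ?_
  rw [norm_mul, norm_prod]
  congr 1
  · simpa using abs_of_nonneg (hc c)
  · exact Finset.prod_congr rfl fun j _ => by rw [norm_pow]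

lemma eval_mono (p : MvPolynomial (Fin n) ℝ)
    (hc : ∀ c : Fin n →₀ ℕ, 0 ≤ coeff c p) {w x : Fin n → ℝ}
    (hw : ∀ j, 0 ≤ w j) (hwx : ∀ j, w j ≤ x j) :
    eval w p ≤ eval x p := by
  rw [eval_eq, eval_eq]
  refine Finset.sum_le_sum fun c _ => ?_
  refine mul_le_mul_of_nonneg_left ?_ (hc c)
  exact Finset.prod_le_prod (fun j _ => pow_nonneg (hw j) _)
    (fun j _ => pow_le_pow_left₀ (hw j) (hwx j) _)

lemma eval_smul {d : ℕ} (p : MvPolynomial (Fin n) ℝ) (hp : p.IsHomogeneous d)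
    (t : ℝ) (x : Fin n → ℝ) :
    eval (fun j => t * x j) p = t ^ d * eval x p := by
  rw [eval_eq', eval_eq', Finset.mul_sum]
  refine Finset.sum_congr rfl fun c hcs => ?_
  have hdeg : ∑ j, c j = d := by
    have := hp (mem_support_iff.mp hcs)
    rw [← this]
    simp [Finsupp.weight, Finsupp.linearCombination, Finsupp.sum]
    exact (Finset.sum_subset (Finset.subset_univ c.support)
      (fun j _ hj => by simp [Finsupp.notMem_support_iff.mp hj])).symm
  calc coeff c p * ∏ j, (t * x j) ^ c j
      = coeff c p * ((∏ j, t ^ c j) * ∏ j, x j ^ c j) := by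
        rw [← Finset.prod_mul_distrib]; simp [mul_pow]
    _ = t ^ d * (coeff c p * ∏ j, x j ^ c j) := by
        rw [Finset.prod_pow_eq_pow_sum, hdeg]; ring

end AuxPerron

/-- For a weakly irreducible polynomial map whose components are homogeneous of
degree `d` with nonnegative coefficients, the eigenvalue `λ` associated with a
positive eigenvector dominates the modulus of any complex eigenvalue: if
`P_i(v) = ν v_i^d` for some nonzero `v ∈ ℂ^n`, then `|ν| ≤ λ`. -/
theorem complex_eigenvalue_le_perron_root (n : ℕ) (hn : 0 < n) (d : ℕ) (hd : 1 ≤ d)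
    (P : Fin n → MvPolynomial (Fin n) ℝ)
    (hcoeff : ∀ i (c : Fin n →₀ ℕ), 0 ≤ coeff c (P i))
    (hhom : ∀ i, (P i).IsHomogeneous d)
    (hweak : ∀ i j : Fin n, Relation.ReflTransGen
      (fun i j => ∃ c : Fin n →₀ ℕ, coeff c (P i) ≠ 0 ∧ c j ≠ 0) i j)
    (u : Fin n → ℝ) (hu : ∀ i, 0 < u i) (lam : ℝ) (hlam : 0 < lam)
    (heig : ∀ i, eval u (P i) = lam * u i ^ d)
    (ν : ℂ) (v : Fin n → ℂ) (hv : v ≠ 0)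
    (hveig : ∀ i, aeval v (P i) = ν * v i ^ d) :
    ‖ν‖ ≤ lam := by
  haveI : Nonempty (Fin n) := ⟨⟨0, hn⟩⟩
  set w : Fin n → ℝ := fun j => ‖v j‖ with hw
  -- choose i0 maximizing w i / u i
  obtain ⟨i0, -, hi0⟩ := Finset.exists_max_image Finset.univ (fun i => w i / u i)
    ⟨Classical.arbitrary _, Finset.mem_univ _⟩
  set t : ℝ := w i0 / u i0 with ht
  have htpos : 0 < t := by
    rcases Function.ne_iff.mp hv with ⟨j, hj⟩
    have hwj : 0 < w j := by
      simpa [hw] using (norm_pos_iff).mpr (by simpa using hj)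
    have := hi0 j (Finset.mem_univ j)
    have : 0 < w j / u j := div_pos hwj (hu j)
    linarith [hi0 j (Finset.mem_univ j)]
  have hwi0 : w i0 = t * u i0 := by
    rw [ht, div_mul_cancel₀ _ (hu i0).ne']
  have hwle : ∀ j, w j ≤ t * u j := fun j => by
    have h := (div_le_iff₀ (hu j)).mp (hi0 j (Finset.mem_univ j))
    linarith [h]
  -- key chain at i0
  have key : ‖ν‖ * w i0 ^ d ≤ lam * (t * u i0) ^ d := by
    calc ‖ν‖ * w i0 ^ d
        = ‖ν * v i0 ^ d‖ := by simp [hw, norm_mul, norm_pow]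
      _ = ‖aeval v (P i0)‖ := by rw [hveig i0]
      _ ≤ eval w (P i0) := AuxPerron.abs_aeval_le (P i0) (hcoeff i0) v
      _ ≤ eval (fun j => t * u j) (P i0) :=
          AuxPerron.eval_mono (P i0) (hcoeff i0)
            (fun j => norm_nonneg _) hwle
      _ = t ^ d * eval u (P i0) := AuxPerron.eval_smul (P i0) (hhom i0) t u
      _ = lam * (t * u i0) ^ d := by rw [heig i0, mul_pow]; ring
  rw [hwi0] at key
  have hpos : 0 < (t * u i0) ^ d := pow_pos (mul_pos htpos (hu i0)) d
  exact le_of_mul_le_mul_right key hpos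
end
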